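/- arXiv:math/0209367 — 13 statements merged into one kernel-verified Lean document; each statement's English description precedes it below -/
import Mathlib

section
/- Let $R = k[X_0,\dots,X_m]/J$ be an $\mathbb{N}$-graded domain where $k$ is a domain, the variables $X_i$ have positive weights $A_i$, and $J$ is homogeneous. Let $A = \mathrm{lcm}(A_0,\dots,A_m)$ and let $I = R_{\geq mA}$ be the ideal generated by all homogeneous elements of degree at least $mA$. Then for every integer $p \geq 1$, $I^p = R_{\geq pmA}$. -/
/-!
Every `A i` divides `L`, so `X_i ^ (L / A i)` has weight exactly `L`. A monomial of weight at
least `n * L`, where `n` is the number of variables, contains one of these `n` monomials: otherwise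
each exponent satisfies `s i * A i ≤ L - A i`, and the weight is below `n * L`. Peeling such factors
off one at a time, a monomial of weight at least `(n - 1 + j) * L` splits as a monomial of weight
exactly `j * L` times the rest. Hence `R_{≥ jL + b} ⊆ R_{≥ jL} * R_{≥ b}` whenever
`b ≥ (n - 1) * L`, the reverse inclusion being clear, and `R_{≥ pmL} = (R_{≥ mL})^p` follows by
induction on `p`. Taking images in the quotient by `J` commutes with powers of ideals.
-/

open MvPolynomial

namespace Finsupp

variable {σ : Type*} [Fintype σ] [Nonempty σ] (A : σ → ℕ) (L : ℕ)

theorem exists_div_le_apply_of_card_mul_le_weight (s : σ →₀ ℕ)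
    (hs : Fintype.card σ * L ≤ weight A s) : ∃ i, L / A i ≤ s i := by
  by_contra! hlt
  have hterm : ∀ i, s i * A i + 1 ≤ L := fun i => by
    have hA : 0 < A i := Nat.pos_of_ne_zero fun h => by simpa [h] using hlt i
    calc s i * A i + 1 ≤ (s i + 1) * A i := by rw [add_one_mul]; omega
      _ ≤ L / A i * A i := Nat.mul_le_mul_right _ (hlt i)
      _ ≤ L := Nat.div_mul_le_self L (A i)
  have hweight : weight A s + Fintype.card σ ≤ Fintype.card σ * L := by
    rw [weight_apply, sum_fintype _ _ (by simp)]
    simpa [Finset.sum_add_distrib, mul_comm] using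
      Finset.sum_le_sum fun i (_ : i ∈ Finset.univ) => hterm i
  have : 0 < Fintype.card σ := Fintype.card_pos
  omega

variable {A L}

theorem exists_le_weight_eq_mul (hdvd : ∀ i, A i ∣ L) (j : ℕ) (s : σ →₀ ℕ)
    (hs : (Fintype.card σ - 1 + j) * L ≤ weight A s) :
    ∃ t ≤ s, weight A t = j * L := by
  induction j generalizing s with
  | zero => exact ⟨0, by simp, by simp⟩
  | succ j ih =>
    have hcard : Fintype.card σ * L ≤ weight A s :=
      le_trans (Nat.mul_le_mul_right L (by have := @Fintype.card_pos σ _ _; omega)) hs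
    obtain ⟨i, hi⟩ := exists_div_le_apply_of_card_mul_le_weight A L s hcard
    set u := single i (L / A i)
    have hu : u ≤ s := single_le_iff.2 hi
    have hwu : weight A u = L := by
      rw [weight_single, smul_eq_mul, Nat.div_mul_cancel (hdvd i)]
    have hsplit : weight A (s - u) + L = weight A s := by
      rw [← hwu, ← map_add, tsub_add_cancel_of_le hu]
    have hdeg : (Fintype.card σ - 1 + (j + 1)) * L = (Fintype.card σ - 1 + j) * L + L := by ring
    obtain ⟨t, hts, ht⟩ := ih (s - u) (by omega)
    refine ⟨t + u, ?_, by rw [map_add, ht, hwu, add_one_mul]⟩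
    exact (add_le_add hts le_rfl).trans_eq (tsub_add_cancel_of_le hu)

end Finsupp

namespace MvPolynomial

variable {σ R : Type*} [CommSemiring R] (A : σ → ℕ)

/-- The ideal `R_{≥ d}` for the grading with weights `A`. -/
noncomputable def weightedDegreeGeIdeal (d : ℕ) : Ideal (MvPolynomial σ R) :=
  Ideal.span {f | ∃ e : ℕ, d ≤ e ∧ IsWeightedHomogeneous A f e}

theorem weightedDegreeGeIdeal_zero : weightedDegreeGeIdeal (R := R) A 0 = ⊤ :=
  (Ideal.eq_top_iff_one _).2 <| Ideal.subset_span ⟨0, le_rfl, isWeightedHomogeneous_one R A⟩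

theorem monomial_mem_weightedDegreeGeIdeal {d : ℕ} {s : σ →₀ ℕ} (hs : d ≤ Finsupp.weight A s)
    (c : R) : monomial s c ∈ weightedDegreeGeIdeal A d :=
  Ideal.subset_span ⟨_, hs, isWeightedHomogeneous_monomial _ _ _ rfl⟩

theorem weightedDegreeGeIdeal_mul_le (a b : ℕ) :
    weightedDegreeGeIdeal (R := R) A a * weightedDegreeGeIdeal A b ≤
      weightedDegreeGeIdeal A (a + b) := by
  rw [weightedDegreeGeIdeal, weightedDegreeGeIdeal, Ideal.span_mul_span']
  refine Ideal.span_mono ?_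
  rintro _ ⟨f, ⟨d, hd, hf⟩, g, ⟨e, he, hg⟩, rfl⟩
  exact ⟨d + e, add_le_add hd he, hf.mul hg⟩

variable [Fintype σ] [Nonempty σ] {A} {L : ℕ}

theorem weightedDegreeGeIdeal_mul_add_le_mul (hdvd : ∀ i, A i ∣ L) (j : ℕ) {b : ℕ}
    (hb : (Fintype.card σ - 1) * L ≤ b) :
    weightedDegreeGeIdeal (R := R) A (j * L + b) ≤
      weightedDegreeGeIdeal A (j * L) * weightedDegreeGeIdeal A b := by
  refine Ideal.span_le.2 fun f ⟨d, hd, hf⟩ => ?_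
  rw [SetLike.mem_coe, f.as_sum]
  refine Ideal.sum_mem _ fun s hs => ?_
  have hws : Finsupp.weight A s = d := hf (mem_support_iff.mp hs)
  obtain ⟨t, hts, ht⟩ := Finsupp.exists_le_weight_eq_mul hdvd j s (by rw [add_mul]; omega)
  have hsplit : t + (s - t) = s := add_tsub_cancel_of_le hts
  have hrest : b ≤ Finsupp.weight A (s - t) := by
    have := congrArg (Finsupp.weight A) hsplit
    rw [map_add] at this
    omega
  rw [show monomial s (coeff s f) = monomial t 1 * monomial (s - t) (coeff s f) by
    rw [monomial_mul, hsplit, one_mul]]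
  exact Ideal.mul_mem_mul (monomial_mem_weightedDegreeGeIdeal A ht.ge 1)
    (monomial_mem_weightedDegreeGeIdeal A hrest _)

theorem weightedDegreeGeIdeal_pow (hdvd : ∀ i, A i ∣ L) {n : ℕ}
    (hn : Fintype.card σ - 1 ≤ n) (p : ℕ) :
    weightedDegreeGeIdeal (R := R) A (n * L) ^ p = weightedDegreeGeIdeal A (p * n * L) := by
  rcases Nat.eq_zero_or_pos p with rfl | hp
  · simp [weightedDegreeGeIdeal_zero]
  induction p, hp using Nat.le_induction with
  | base => simp
  | succ p hp ih =>
    have hdeg : (p + 1) * n * L = n * L + p * n * L := by ring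
    rw [pow_succ', ih, hdeg]
    refine le_antisymm (weightedDegreeGeIdeal_mul_le A _ _) ?_
    refine weightedDegreeGeIdeal_mul_add_le_mul hdvd n ?_
    calc (Fintype.card σ - 1) * L ≤ n * L := Nat.mul_le_mul_right L hn
      _ ≤ p * n * L := by rw [mul_assoc]; exact Nat.le_mul_of_pos_left _ hp

end MvPolynomial

theorem stmt0_general (m : ℕ) (k : Type*) [CommRing k]
    (A : Fin (m + 1) → ℕ)
    (L : ℕ) (hL : L = Finset.univ.lcm A)
    (J : Ideal (MvPolynomial (Fin (m + 1)) k))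
    (I : Ideal (MvPolynomial (Fin (m + 1)) k ⧸ J))
    (hI : I = Ideal.map (Ideal.Quotient.mk J)
      (Ideal.span {f | ∃ d : ℕ, m * L ≤ d ∧ IsWeightedHomogeneous A f d}))
    (p : ℕ) :
    I ^ p = Ideal.map (Ideal.Quotient.mk J)
      (Ideal.span {f | ∃ d : ℕ, p * m * L ≤ d ∧ IsWeightedHomogeneous A f d}) := by
  have hdvd : ∀ i, A i ∣ L := fun i => hL ▸ Finset.dvd_lcm (Finset.mem_univ i)
  have hpow := weightedDegreeGeIdeal_pow (R := k) hdvd (n := m) (by simp) p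
  rw [hI, ← Ideal.map_pow]
  exact congrArg _ hpow

theorem stmt0 (m : ℕ) (hm : 1 ≤ m) (k : Type*) [CommRing k] [IsDomain k]
    (A : Fin (m + 1) → ℕ) (hApos : ∀ i, 0 < A i)
    (L : ℕ) (hL : L = Finset.univ.lcm A)
    (J : Ideal (MvPolynomial (Fin (m + 1)) k))
    (hJhom : ∀ f ∈ J, ∀ d : ℕ, weightedHomogeneousComponent A d f ∈ J)
    [IsDomain (MvPolynomial (Fin (m + 1)) k ⧸ J)]
    (I : Ideal (MvPolynomial (Fin (m + 1)) k ⧸ J))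
    (hI : I = Ideal.map (Ideal.Quotient.mk J)
      (Ideal.span {f | ∃ d : ℕ, m * L ≤ d ∧ IsWeightedHomogeneous A f d}))
    (p : ℕ) (hp : 1 ≤ p) :
    I ^ p = Ideal.map (Ideal.Quotient.mk J)
      (Ideal.span {f | ∃ d : ℕ, p * m * L ≤ d ∧ IsWeightedHomogeneous A f d}) :=
  stmt0_general m k A L hL J I hI p
end

section
/- Let $R = k[X_0,\dots,X_m]/J$ be an $\mathbb{N}$-graded normal domain with $k$ a domain, the variables having positive weights $A_0,\dots,A_m$, and $A = \mathrm{lcm}(A_0,\dots,A_m)$. Then the ideal $I = R_{\geq mA}$ is a normal ideal, i.e., every positive power $I^n$ is integrally closed in $R$. -/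
set_option synthInstance.maxHeartbeats 400000
set_option maxHeartbeats 800000
open MvPolynomial

/-- `x` is integral over the ideal `I`: it satisfies an equation
`x^n + a_1 x^{n-1} + ⋯ + a_n = 0` with `a_i ∈ I^i`. -/
def IsIntegralOverIdeal {S : Type*} [CommRing S] (I : Ideal S) (x : S) : Prop :=
  ∃ n : ℕ, 0 < n ∧ ∃ a : ℕ → S, (∀ i ∈ Finset.Icc 1 n, a i ∈ I ^ i) ∧
    x ^ n + ∑ i ∈ Finset.Icc 1 n, a i * x ^ (n - i) = 0


namespace NormalAux

open Finsupp

variable {k : Type*} [CommRing k] {σ : Type*}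

/-- The ideal of polynomials all of whose monomials have weighted degree at least `c`. -/
noncomputable def lowIdeal (A : σ → ℕ) (c : ℕ) : Ideal (MvPolynomial σ k) where
  carrier := {f | ∀ α ∈ f.support, c ≤ weight A α}
  zero_mem' := by intro α hα; simp at hα
  add_mem' := by
    classical
    intro p q hp hq α hα
    rcases Finset.mem_union.mp (MvPolynomial.support_add hα) with h | h
    · exact hp α h
    · exact hq α h
  smul_mem' := by
    classical
    intro r p hp α hα
    rw [smul_eq_mul] at hα
    obtain ⟨β, hβ, γ, hγ, rfl⟩ := Finset.mem_add.mp (MvPolynomial.support_mul r p hα)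
    rw [map_add]
    exact le_trans (hp γ hγ) (Nat.le_add_left _ _)

theorem mem_lowIdeal_iff {A : σ → ℕ} {c : ℕ} {p : MvPolynomial σ k} :
    p ∈ lowIdeal A c ↔ ∀ α ∈ p.support, c ≤ weight A α := Iff.rfl

theorem lowIdeal_mono {A : σ → ℕ} {c c' : ℕ} (h : c ≤ c') :
    (lowIdeal A c' : Ideal (MvPolynomial σ k)) ≤ lowIdeal A c :=
  fun _ hp α hα => le_trans h (hp α hα)

theorem mem_lowIdeal_of_isWeightedHomogeneous {A : σ → ℕ} {c d : ℕ} (h : c ≤ d)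
    {p : MvPolynomial σ k} (hp : IsWeightedHomogeneous A p d) : p ∈ lowIdeal A c := by
  intro α hα
  rw [hp (MvPolynomial.mem_support_iff.mp hα)]
  exact h

theorem mul_mem_lowIdeal {A : σ → ℕ} {a b : ℕ} {p q : MvPolynomial σ k}
    (hp : p ∈ lowIdeal A a) (hq : q ∈ lowIdeal A b) : p * q ∈ lowIdeal A (a + b) := by
  classical
  intro α hα
  obtain ⟨β, hβ, γ, hγ, rfl⟩ := Finset.mem_add.mp (MvPolynomial.support_mul p q hα)
  rw [map_add]
  exact add_le_add (hp β hβ) (hq γ hγ)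

theorem pow_mem_lowIdeal {A : σ → ℕ} {c : ℕ} {p : MvPolynomial σ k}
    (hp : p ∈ lowIdeal A c) (t : ℕ) : p ^ t ∈ lowIdeal A (t * c) := by
  induction t with
  | zero => intro α hα; simpa using Nat.zero_le _
  | succ t ih =>
      have := mul_mem_lowIdeal ih hp
      rw [← pow_succ] at this
      have h2 : (t + 1) * c = t * c + c := by ring
      rw [h2]
      exact this

theorem comp_eq_zero_of_mem_lowIdeal {A : σ → ℕ} {c d : ℕ} {p : MvPolynomial σ k}
    (hp : p ∈ lowIdeal A c) (h : d < c) : weightedHomogeneousComponent A d p = 0 := by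
  apply weightedHomogeneousComponent_eq_zero'
  intro α hα
  exact Nat.ne_of_gt (lt_of_lt_of_le h (hp α hα))

theorem sub_sum_comp_mem (A : σ → ℕ) (c : ℕ) (f : MvPolynomial σ k) :
    f - ∑ d ∈ Finset.range c, weightedHomogeneousComponent A d f ∈ lowIdeal A c := by
  classical
  intro α hα
  by_contra hw
  push_neg at hw
  apply MvPolynomial.mem_support_iff.mp hα
  rw [MvPolynomial.coeff_sub]
  have h1 : MvPolynomial.coeff α (∑ d ∈ Finset.range c, weightedHomogeneousComponent A d f)
      = MvPolynomial.coeff α f := by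
    rw [MvPolynomial.coeff_sum]
    simp only [coeff_weightedHomogeneousComponent]
    rw [Finset.sum_ite_eq (Finset.range c) (weight A α) (fun _ => MvPolynomial.coeff α f)]
    rw [if_pos (Finset.mem_range.mpr hw)]
  rw [h1, sub_self]

theorem pick_sum {ι : Type*} [Fintype ι] [DecidableEq ι] :
    ∀ (M : ℕ) (q : ι → ℕ), M ≤ ∑ i, q i →
      ∃ u : ι → ℕ, (∀ i, u i ≤ q i) ∧ ∑ i, u i = M := by
  intro M
  induction M with
  | zero => exact fun q _ => ⟨0, fun i => Nat.zero_le _, by simp⟩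
  | succ M ih =>
      intro q hq
      obtain ⟨u, hu, hsum⟩ := ih q (le_trans (Nat.le_succ M) hq)
      have hlt : ∑ i, u i < ∑ i, q i := by omega
      have hex : ∃ i, u i < q i := by
        by_contra hc
        push_neg at hc
        exact absurd (Finset.sum_le_sum fun i _ => hc i) (not_le.mpr hlt)
      obtain ⟨i0, hi0⟩ := hex
      refine ⟨Function.update u i0 (u i0 + 1), fun j => ?_, ?_⟩
      · rcases eq_or_ne j i0 with rfl | hne
        · simpa using hi0
        · simp [Function.update_of_ne hne, hu j]
      · rw [Finset.sum_update_of_mem (Finset.mem_univ i0),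
          Finset.sum_eq_sum_sdiff_singleton_add (Finset.mem_univ i0) u] at *
        omega

theorem weight_eq_sum {m : ℕ} (A : Fin (m + 1) → ℕ) (γ : Fin (m + 1) →₀ ℕ) :
    weight A γ = ∑ i, γ i * A i := by
  rw [Finsupp.weight_apply, Finsupp.sum_fintype]
  · simp [smul_eq_mul]
  · intro i; simp

theorem exists_le_weight_eq (m L : ℕ) (A : Fin (m + 1) → ℕ) (hApos : ∀ i, 0 < A i)
    (hdvd : ∀ i, A i ∣ L) (hLpos : 0 < L) (α : Fin (m + 1) →₀ ℕ)
    (hw : 2 * (m * L) ≤ weight A α) :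
    ∃ β : Fin (m + 1) →₀ ℕ, β ≤ α ∧ weight A β = m * L := by
  classical
  set t : Fin (m + 1) → ℕ := fun i => L / A i with ht
  have htA : ∀ i, t i * A i = L := fun i => Nat.div_mul_cancel (hdvd i)
  have htpos : ∀ i, 0 < t i := fun i => Nat.div_pos (Nat.le_of_dvd hLpos (hdvd i)) (hApos i)
  set q : Fin (m + 1) → ℕ := fun i => α i / t i with hq
  have hbound : weight A α < (∑ i, q i) * L + (m + 1) * L := by
    rw [weight_eq_sum]
    calc ∑ i, α i * A i < ∑ i, (q i * L + L) := by
          apply Finset.sum_lt_sum_of_nonempty Finset.univ_nonempty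
          intro i _
          have h1 : α i * A i = q i * L + (α i % t i) * A i := by
            conv_lhs => rw [← Nat.div_add_mod (α i) (t i)]
            rw [← htA i, hq]
            ring
          have h2 : (α i % t i) * A i < L := by
            rw [← htA i]
            exact (Nat.mul_lt_mul_right (hApos i)).mpr (Nat.mod_lt _ (htpos i))
          omega
      _ = (∑ i, q i) * L + (m + 1) * L := by
          rw [Finset.sum_add_distrib, ← Finset.sum_mul]
          simp [Finset.card_univ]
  have hQ : m ≤ ∑ i, q i := by
    by_contra hc
    push_neg at hc
    have h1 : 2 * (m * L) < (∑ i, q i) * L + (m + 1) * L := lt_of_le_of_lt hw hbound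
    have h2 : (∑ i, q i) * L + (m + 1) * L ≤ 2 * (m * L) := by
      calc (∑ i, q i) * L + (m + 1) * L = ((∑ i, q i) + (m + 1)) * L := by ring
        _ ≤ (2 * m) * L := Nat.mul_le_mul_right L (by omega)
        _ = 2 * (m * L) := by ring
    omega
  obtain ⟨u, hu, husum⟩ := pick_sum m q hQ
  refine ⟨Finsupp.equivFunOnFinite.symm (fun i => u i * t i), ?_, ?_⟩
  · rw [Finsupp.le_def]
    intro i
    have : (Finsupp.equivFunOnFinite.symm (fun i => u i * t i)) i = u i * t i := rfl
    rw [this]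
    calc u i * t i ≤ q i * t i := Nat.mul_le_mul_right _ (hu i)
      _ ≤ α i := Nat.div_mul_le_self _ _
  · rw [weight_eq_sum]
    have hcoe : ∀ i, (Finsupp.equivFunOnFinite.symm (fun i => u i * t i)) i = u i * t i :=
      fun i => rfl
    calc ∑ i, (Finsupp.equivFunOnFinite.symm (fun i => u i * t i)) i * A i
        = ∑ i, u i * L := by
          apply Finset.sum_congr rfl
          intro i _
          rw [hcoe i, mul_assoc, htA i]
      _ = (∑ i, u i) * L := by rw [Finset.sum_mul]
      _ = m * L := by rw [husum]

theorem isWeightedHomogeneous_pow {A : σ → ℕ} {e : ℕ} {v : MvPolynomial σ k}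
    (hv : IsWeightedHomogeneous A v e) (N : ℕ) :
    IsWeightedHomogeneous A (v ^ N) (N * e) := by
  induction N with
  | zero => simpa using isWeightedHomogeneous_one k A
  | succ N ih =>
      have := ih.mul hv
      rw [← pow_succ] at this
      have h2 : (N + 1) * e = N * e + e := by ring
      rw [h2]
      exact this

end NormalAux

theorem stmt1 (m : ℕ) (hm : 1 ≤ m) (k : Type*) [CommRing k] [IsDomain k]
    (A : Fin (m + 1) → ℕ) (hApos : ∀ i, 0 < A i)
    (L : ℕ) (hL : L = Finset.univ.lcm A)
    (J : Ideal (MvPolynomial (Fin (m + 1)) k))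
    (hJhom : ∀ f ∈ J, ∀ d : ℕ, weightedHomogeneousComponent A d f ∈ J)
    [IsDomain (MvPolynomial (Fin (m + 1)) k ⧸ J)]
    [IsIntegrallyClosed (MvPolynomial (Fin (m + 1)) k ⧸ J)]
    (I : Ideal (MvPolynomial (Fin (m + 1)) k ⧸ J))
    (hI : I = Ideal.map (Ideal.Quotient.mk J)
      (Ideal.span {f | ∃ d : ℕ, m * L ≤ d ∧ IsWeightedHomogeneous A f d}))
    (n : ℕ) (hn : 1 ≤ n) (x : MvPolynomial (Fin (m + 1)) k ⧸ J)
    (hx : IsIntegralOverIdeal (I ^ n) x) :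
    x ∈ I ^ n := by
  classical
  have hdvd : ∀ i, A i ∣ L := by
    intro i; rw [hL]; exact Finset.dvd_lcm (Finset.mem_univ i)
  have hLpos : 0 < L := by
    rcases Nat.eq_zero_or_pos L with h0 | h
    · exfalso
      rw [h0] at hL
      obtain ⟨i, -, hi⟩ := Finset.lcm_eq_zero_iff.mp hL.symm
      exact (hApos i).ne' hi
    · exact h
  have hJprime : J.IsPrime := (Ideal.Quotient.isDomain_iff_prime J).mp inferInstance
  set K : Ideal (MvPolynomial (Fin (m + 1)) k) :=
    Ideal.span {f | ∃ d : ℕ, m * L ≤ d ∧ IsWeightedHomogeneous A f d} with hK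
  have hKlow : K ≤ NormalAux.lowIdeal A (m * L) := by
    rw [hK, Ideal.span_le]
    rintro f ⟨d, hd, hf⟩
    exact NormalAux.mem_lowIdeal_of_isWeightedHomogeneous hd hf
  have hKpow : ∀ t : ℕ, (K : Ideal (MvPolynomial (Fin (m + 1)) k)) ^ t
      ≤ NormalAux.lowIdeal A (t * (m * L)) := by
    intro t
    induction t with
    | zero =>
        rw [pow_zero, Ideal.one_eq_top]
        intro p _
        rw [NormalAux.mem_lowIdeal_iff]
        intro α _
        simp
    | succ t ih =>
        rw [pow_succ]
        refine le_trans (Ideal.mul_le.mpr fun r hr s hs => ?_) (le_refl _)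
        have h1 := NormalAux.mul_mem_lowIdeal (ih hr) (hKlow hs)
        have h2 : (t + 1) * (m * L) = t * (m * L) + m * L := by ring
        rw [h2]
        exact h1
  -- monomials of high degree lie in K ^ t
  have hmono : ∀ t : ℕ, 1 ≤ t → ∀ α : Fin (m + 1) →₀ ℕ,
      t * (m * L) ≤ Finsupp.weight A α → (monomial α (1 : k)) ∈ K ^ t := by
    intro t ht
    induction t, ht using Nat.le_induction with
    | base =>
        intro α hα
        rw [pow_one, hK]
        exact Ideal.subset_span ⟨Finsupp.weight A α, by simpa using hα,
          isWeightedHomogeneous_monomial _ _ _ rfl⟩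
    | succ t ht ih =>
        intro α hα
        have h2 : 2 * (m * L) ≤ Finsupp.weight A α :=
          le_trans (Nat.mul_le_mul_right _ (by omega : 2 ≤ t + 1)) hα
        obtain ⟨β, hβle, hβw⟩ :=
          NormalAux.exists_le_weight_eq m L A hApos hdvd hLpos α h2
        have hsplit : β + (α - β) = α := add_tsub_cancel_of_le hβle
        have hw2 : t * (m * L) ≤ Finsupp.weight A (α - β) := by
          have hww := congrArg (Finsupp.weight A) hsplit
          rw [map_add] at hww
          have : (t + 1) * (m * L) = t * (m * L) + m * L := by ring
          omega
        have heqm : monomial α (1 : k) = monomial β 1 * monomial (α - β) 1 := by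
          rw [monomial_mul, one_mul, hsplit]
        rw [heqm, pow_succ']
        refine Ideal.mul_mem_mul ?_ (ih _ hw2)
        rw [hK]
        exact Ideal.subset_span ⟨m * L, le_refl _,
          isWeightedHomogeneous_monomial _ _ _ hβw⟩
  have hlowK : ∀ p : MvPolynomial (Fin (m + 1)) k,
      p ∈ NormalAux.lowIdeal A (n * (m * L)) → p ∈ K ^ n := by
    intro p hp
    rw [p.as_sum]
    refine Ideal.sum_mem _ fun α hα => ?_
    have hmon : monomial α (coeff α p) = C (coeff α p) * monomial α 1 := by
      rw [C_mul_monomial, mul_one]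
    rw [hmon]
    exact Ideal.mul_mem_left _ _ (hmono n hn α (hp α hα))
  -- unpack the integral equation
  obtain ⟨N, hN, a, ha, heq⟩ := hx
  obtain ⟨f, rfl⟩ := Ideal.Quotient.mk_surjective x
  choose b hb using fun i => Ideal.Quotient.mk_surjective (a i)
  have hbmem : ∀ i ∈ Finset.Icc 1 N, b i ∈ K ^ (n * i) ⊔ J := by
    intro i hi
    have hai := ha i hi
    rw [hI, ← Ideal.map_pow, ← Ideal.map_pow, ← pow_mul, ← hb i] at hai
    exact Ideal.mem_quotient_iff_mem_sup.mp hai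
  rw [hI, ← Ideal.map_pow]
  rw [Ideal.mem_quotient_iff_mem_sup]
  -- now show f ∈ K ^ n ⊔ J
  by_cases hall : ∀ d : ℕ, weightedHomogeneousComponent A d f ∈ J
  · refine Ideal.mem_sup_right ?_
    have hf := sum_weightedHomogeneousComponent A f
    rw [← hf, finsum_eq_sum _ (weightedHomogeneousComponent_finsupp f)]
    exact Ideal.sum_mem _ fun d _ => hall d
  · push_neg at hall
    have he := Nat.find_spec hall
    set e := Nat.find hall with hedef
    have hemin : ∀ d < e, weightedHomogeneousComponent A d f ∈ J := by
      intro d hd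
      by_contra hc
      exact absurd hc (Nat.find_min hall hd)
    set D := n * (m * L) with hD
    have heD : D ≤ e := by
      by_contra hlt
      push_neg at hlt
      set h := ∑ d ∈ Finset.range e, weightedHomogeneousComponent A d f with hh
      have hhJ : h ∈ J := Ideal.sum_mem _ fun d hd => hemin d (Finset.mem_range.mp hd)
      set u := f - h with hu
      have huf : Ideal.Quotient.mk J u = Ideal.Quotient.mk J f := by
        rw [hu, map_sub, Ideal.Quotient.eq_zero_iff_mem.mpr hhJ, sub_zero]
      have hulow : u ∈ NormalAux.lowIdeal A e := NormalAux.sub_sum_comp_mem A e f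
      set v := weightedHomogeneousComponent A e u with hv
      have hvhom : IsWeightedHomogeneous A v e :=
        weightedHomogeneousComponent_isWeightedHomogeneous e u
      have hvlow : v ∈ NormalAux.lowIdeal A e :=
        NormalAux.mem_lowIdeal_of_isWeightedHomogeneous (le_refl _) hvhom
      have hvJ : v ∉ J := by
        intro hvJ
        apply he
        have hfuh : weightedHomogeneousComponent A e f
            = v + weightedHomogeneousComponent A e h := by
          rw [hv, ← map_add]
          congr 1
          rw [hu]; ring
        rw [hfuh]
        exact Ideal.add_mem _ hvJ (hJhom h hhJ e)
      set r := u - v with hr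
      have hrlow : r ∈ NormalAux.lowIdeal A (e + 1) := by
        intro α hα
        have h1 : e ≤ Finsupp.weight A α :=
          (Submodule.sub_mem _ hulow hvlow : u - v ∈ NormalAux.lowIdeal A e) α hα
        rcases Nat.lt_or_ge (Finsupp.weight A α) (e + 1) with h2 | h2
        · exfalso
          have hwe : Finsupp.weight A α = e := by omega
          apply MvPolynomial.mem_support_iff.mp hα
          rw [hr, MvPolynomial.coeff_sub, hv, coeff_weightedHomogeneousComponent,
            if_pos hwe, sub_self]
        · exact h2
      have hw' : u ^ N + ∑ i ∈ Finset.Icc 1 N, b i * u ^ (N - i) ∈ J := by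
        rw [← Ideal.Quotient.eq_zero_iff_mem, map_add, map_pow, map_sum]
        simp only [map_mul, map_pow, huf, hb]
        exact heq
      set E := N * e with hE
      have hcomp : weightedHomogeneousComponent A E
          (u ^ N + ∑ i ∈ Finset.Icc 1 N, b i * u ^ (N - i)) ∈ J := hJhom _ hw' E
      -- compute the component
      have hudecomp : u = v + r := by rw [hr]; ring
      have hs0 : u ^ N - v ^ N ∈ NormalAux.lowIdeal A (E + 1) := by
        have hpow : u ^ N - v ^ N
            = ∑ kk ∈ Finset.range N, v ^ kk * r ^ (N - kk) * (N.choose kk : MvPolynomial (Fin (m + 1)) k) := by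
          conv_lhs => rw [hudecomp, add_pow, Finset.sum_range_succ]
          simp
        rw [hpow]
        refine Ideal.sum_mem _ fun kk hkk => ?_
        have hkkN : kk < N := Finset.mem_range.mp hkk
        refine Ideal.mul_mem_right _ _ ?_
        have hterm := NormalAux.mul_mem_lowIdeal
          (NormalAux.pow_mem_lowIdeal hvlow kk)
          (NormalAux.pow_mem_lowIdeal hrlow (N - kk))
        refine NormalAux.lowIdeal_mono ?_ hterm
        have hw : kk * e + (N - kk) * (e + 1) = (kk + (N - kk)) * e + (N - kk) := by ring
        rw [hw, hE]
        have : kk + (N - kk) = N := by omega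
        rw [this]
        omega
      have hcompsum : ∀ i ∈ Finset.Icc 1 N,
          weightedHomogeneousComponent A E (b i * u ^ (N - i)) ∈ J := by
        intro i hi
        obtain ⟨hi1, hi2⟩ := Finset.mem_Icc.mp hi
        obtain ⟨c, hc, j', hj', hbi⟩ := Submodule.mem_sup.mp (hbmem i hi)
        have hclow : c ∈ NormalAux.lowIdeal A ((n * i) * (m * L)) := hKpow (n * i) hc
        have hculow : c * u ^ (N - i) ∈ NormalAux.lowIdeal A (E + 1) := by
          have hterm := NormalAux.mul_mem_lowIdeal hclow
            (NormalAux.pow_mem_lowIdeal hulow (N - i))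
          refine NormalAux.lowIdeal_mono ?_ hterm
          -- E + 1 ≤ n * i * (m * L) + (N - i) * e
          have hD1 : e + 1 ≤ n * (m * L) := hlt
          have hni : n * (m * L) ≤ n * i * (m * L) := by
            calc n * (m * L) = (n * 1) * (m * L) := by ring
              _ ≤ n * i * (m * L) := Nat.mul_le_mul_right _ (Nat.mul_le_mul_left _ hi1)
          have hie : i * (e + 1) ≤ n * i * (m * L) := by
            calc i * (e + 1) ≤ i * (n * (m * L)) := Nat.mul_le_mul_left _ hD1
              _ = n * i * (m * L) := by ring
          have hsplitN : i * (e + 1) + (N - i) * e = N * e + i := by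
            have h3 : i * (e + 1) + (N - i) * e = (i + (N - i)) * e + i := by ring
            rw [h3]
            have : i + (N - i) = N := by omega
            rw [this]
          rw [hE]
          omega
        rw [← hbi, add_mul, map_add]
        refine Ideal.add_mem _ ?_ ?_
        · rw [NormalAux.comp_eq_zero_of_mem_lowIdeal hculow (Nat.lt_succ_self E)]
          exact J.zero_mem
        · exact hJhom _ (Ideal.mul_mem_right _ _ hj') E
      have hvN : v ^ N ∈ J := by
        have hsplit2 : u ^ N + ∑ i ∈ Finset.Icc 1 N, b i * u ^ (N - i)
            = v ^ N + (u ^ N - v ^ N) + ∑ i ∈ Finset.Icc 1 N, b i * u ^ (N - i) := by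
          ring
        rw [hsplit2, map_add, map_add] at hcomp
        have hcompv : weightedHomogeneousComponent A E (v ^ N) = v ^ N := by
          have hvNhom : IsWeightedHomogeneous A (v ^ N) E := by
            rw [hE]; exact NormalAux.isWeightedHomogeneous_pow hvhom N
          exact hvNhom.weightedHomogeneousComponent_same
        rw [hcompv, NormalAux.comp_eq_zero_of_mem_lowIdeal hs0 (Nat.lt_succ_self E),
          add_zero, map_sum] at hcomp
        have hsumJ : ∑ i ∈ Finset.Icc 1 N,
            weightedHomogeneousComponent A E (b i * u ^ (N - i)) ∈ J :=
          Ideal.sum_mem _ hcompsum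
        have := Ideal.sub_mem _ hcomp hsumJ
        simpa using this
      exact hvJ (hJprime.mem_of_pow_mem N hvN)
    -- now e ≥ D
    set h := ∑ d ∈ Finset.range D, weightedHomogeneousComponent A d f with hh
    have hhJ : h ∈ J :=
      Ideal.sum_mem _ fun d hd => hemin d (lt_of_lt_of_le (Finset.mem_range.mp hd) heD)
    have hfl : f - h ∈ NormalAux.lowIdeal A D := NormalAux.sub_sum_comp_mem A D f
    refine Submodule.mem_sup.mpr ⟨f - h, hlowK _ hfl, h, hhJ, by ring⟩
end

section
/- Let $S$ be an $\mathbb{N}$-graded Noetherian domain and $\alpha$ a positive integer. Then the ideal $I = S_{\geq \alpha}$ generated by all homogeneous elements of degree at least $\alpha$ is integrally closed in $S$. -/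
open DirectSum

section
variable {S : Type*} [CommRing S] (𝒜 : ℕ → AddSubgroup S) [GradedRing 𝒜]

local notation "cmp" => fun (y : S) (e : ℕ) => (DirectSum.decompose 𝒜 y e : S)

lemma my_key {a b : ℕ} {y z : S}
    (hy : ∀ e < a, (DirectSum.decompose 𝒜 y e : S) = 0)
    (hz : ∀ e < b, (DirectSum.decompose 𝒜 z e : S) = 0) :
    (∀ e < a + b, (DirectSum.decompose 𝒜 (y * z) e : S) = 0) ∧
      (DirectSum.decompose 𝒜 (y * z) (a + b) : S)
        = (DirectSum.decompose 𝒜 y a : S) * (DirectSum.decompose 𝒜 z b : S) := by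
  classical
  have hmul : ∀ n : ℕ, (DirectSum.decompose 𝒜 (y * z) n : S) =
      ∑ ij ∈ ((DirectSum.decompose 𝒜 y).support ×ˢ (DirectSum.decompose 𝒜 z).support).filter
        (fun ij : ℕ × ℕ => ij.1 + ij.2 = n),
        (DirectSum.decompose 𝒜 y ij.1 : S) * (DirectSum.decompose 𝒜 z ij.2 : S) := by
    intro n
    rw [DirectSum.decompose_mul, DirectSum.coe_mul_apply]
  constructor
  · intro e he
    rw [hmul e]
    apply Finset.sum_eq_zero
    intro ij hij
    simp only [Finset.mem_filter, Finset.mem_product] at hij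
    rcases lt_or_ge ij.1 a with h1 | h1
    · rw [hy _ h1, zero_mul]
    · have : ij.2 < b := by omega
      rw [hz _ this, mul_zero]
  · rw [hmul (a + b)]
    apply Finset.sum_eq_single (a, b)
    · intro ij hij hne
      simp only [Finset.mem_filter, Finset.mem_product] at hij
      rcases lt_trichotomy ij.1 a with h1 | h1 | h1
      · rw [hy _ h1, zero_mul]
      · exact absurd (Prod.ext h1 (by omega)) hne
      · have : ij.2 < b := by omega
        rw [hz _ this, mul_zero]
    · intro hnot
      simp only [Finset.mem_filter, Finset.mem_product, DFinsupp.mem_support_iff, not_and,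
        not_not] at hnot
      by_cases ha : DirectSum.decompose 𝒜 y a = 0
      · rw [ha]; simp
      · by_cases hb : DirectSum.decompose 𝒜 z b = 0
        · rw [hb]; simp
        · exact absurd trivial (hnot ⟨ha, hb⟩)

lemma my_pow {d : ℕ} {x : S} (hd : ∀ e < d, (DirectSum.decompose 𝒜 x e : S) = 0) (n : ℕ) :
    (∀ e < n * d, (DirectSum.decompose 𝒜 (x ^ n) e : S) = 0) ∧
      (DirectSum.decompose 𝒜 (x ^ n) (n * d) : S) = (DirectSum.decompose 𝒜 x d : S) ^ n := by
  induction n with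
  | zero =>
    refine ⟨fun e he => absurd he (by omega), ?_⟩
    have h0 : 0 * d = 0 := Nat.zero_mul d
    rw [pow_zero, pow_zero, h0]
    exact DirectSum.decompose_of_mem_same 𝒜 SetLike.GradedOne.one_mem
  | succ n ih =>
    have h := my_key 𝒜 ih.1 hd
    have harith : (n + 1) * d = n * d + d := by ring
    rw [pow_succ, harith]
    exact ⟨h.1, by rw [h.2, ih.2, pow_succ]⟩

lemma my_span (α : ℕ) {y : S} (hy : y ∈ Ideal.span {x : S | ∃ d : ℕ, α ≤ d ∧ x ∈ 𝒜 d}) :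
    ∀ e < α, (DirectSum.decompose 𝒜 y e : S) = 0 := by
  refine Submodule.span_induction ?_ ?_ ?_ ?_ hy
  · rintro g ⟨d, hd, hg⟩ e he
    rw [DirectSum.decompose_of_mem_ne 𝒜 hg (by omega)]
  · intro e he; simp
  · intro u v _ _ hu hv e he
    rw [DirectSum.decompose_add]
    simp only [DirectSum.add_apply, AddSubgroup.coe_add, hu e he, hv e he, add_zero]
  · intro s u _ hu e he
    have h := my_key 𝒜 (a := 0) (y := s) (fun e he => absurd he (by omega)) hu
    simpa using h.1 e (by omega)

lemma my_pow_mem (α : ℕ) (I : Ideal S) (hI : I = Ideal.span {x : S | ∃ d : ℕ, α ≤ d ∧ x ∈ 𝒜 d})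
    (i : ℕ) {y : S} (hy : y ∈ I ^ i) :
    ∀ e < i * α, (DirectSum.decompose 𝒜 y e : S) = 0 := by
  induction i generalizing y with
  | zero => exact fun e he => absurd he (by omega)
  | succ i ih =>
    rw [pow_succ] at hy
    refine Submodule.mul_induction_on hy ?_ ?_
    · intro m hm r hr e he
      have h := my_key 𝒜 (ih hm) (my_span 𝒜 α (hI ▸ hr))
      have harith : (i + 1) * α = i * α + α := by ring
      exact h.1 e (by omega)
    · intro u v hu hv e he
      rw [DirectSum.decompose_add]
      simp only [DirectSum.add_apply, AddSubgroup.coe_add, hu e he, hv e he, add_zero]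

end

theorem stmt2 (S : Type*) [CommRing S] [IsDomain S] [IsNoetherianRing S]
    (𝒜 : ℕ → AddSubgroup S) [GradedRing 𝒜]
    (α : ℕ) (hα : 0 < α)
    (I : Ideal S) (hI : I = Ideal.span {x | ∃ d : ℕ, α ≤ d ∧ x ∈ 𝒜 d})
    (x : S) (hx : IsIntegralOverIdeal I x) : x ∈ I := by
  classical
  -- It suffices to show all components of `x` in degrees `< α` vanish.
  suffices hcomp : ∀ e < α, (DirectSum.decompose 𝒜 x e : S) = 0 by
    rw [hI]
    rw [← DirectSum.sum_support_decompose 𝒜 x]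
    apply Ideal.sum_mem
    intro d hd
    rcases lt_or_ge d α with h | h
    · rw [hcomp d h]; exact Ideal.zero_mem _
    · exact Ideal.subset_span ⟨d, h, SetLike.coe_mem _⟩
  by_contra hcon
  push_neg at hcon
  obtain ⟨e0, he0, hne0⟩ := hcon
  have hex : ∃ e, (DirectSum.decompose 𝒜 x e : S) ≠ 0 := ⟨e0, hne0⟩
  set d := Nat.find hex with hd_def
  have hxd : (DirectSum.decompose 𝒜 x d : S) ≠ 0 := Nat.find_spec hex
  have hdlt : d < α := lt_of_le_of_lt (Nat.find_min' hex hne0) he0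
  have hlow : ∀ e < d, (DirectSum.decompose 𝒜 x e : S) = 0 := by
    intro e he
    by_contra h
    exact absurd he (not_lt.mpr (Nat.find_min' hex h))
  obtain ⟨n, hn, a, ha, heq⟩ := hx
  -- take the component of degree `n * d` of the integral equation
  have h0 : (DirectSum.decompose 𝒜 (x ^ n + ∑ i ∈ Finset.Icc 1 n, a i * x ^ (n - i)) (n * d) : S)
      = 0 := by rw [heq]; simp
  rw [DirectSum.decompose_add] at h0
  simp only [DirectSum.add_apply, AddSubgroup.coe_add] at h0
  have hpow := my_pow 𝒜 hlow n
  rw [hpow.2] at h0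
  have hsum : (DirectSum.decompose 𝒜 (∑ i ∈ Finset.Icc 1 n, a i * x ^ (n - i)) (n * d) : S)
      = 0 := by
    rw [DirectSum.decompose_sum]
    rw [DFinsupp.finset_sum_apply]
    rw [AddSubmonoidClass.coe_finset_sum]
    apply Finset.sum_eq_zero
    intro i hi
    simp only [Finset.mem_Icc] at hi
    have hai := my_pow_mem 𝒜 α I hI i (ha i (Finset.mem_Icc.mpr hi))
    have hxp := (my_pow 𝒜 hlow (n - i)).1
    have h := (my_key 𝒜 hai hxp).1
    apply h
    have h1 : n * d = i * d + (n - i) * d := by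
      rw [Nat.sub_mul]
      have : i * d ≤ n * d := Nat.mul_le_mul_right d hi.2
      omega
    have h2 : i * d < i * α := by
      have hi1 : 0 < i := hi.1
      exact mul_lt_mul_of_pos_left hdlt hi1
    omega
  rw [hsum, add_zero] at h0
  exact hxd (pow_eq_zero_iff (by omega) |>.mp h0)
end

section
/- Let $S$ be a normal Noetherian domain and $I$ an ideal of $S$. Then the Rees algebra $S[It] = \bigoplus_{n \geq 0} I^n t^n$ is a normal domain if and only if $I^n$ is integrally closed in $S$ for every positive integer $n$. -/
open Polynomial Finset

open scoped nonZeroDivisors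

section General

variable {R B : Type*} [CommRing R] [CommRing B] [Algebra R B]

theorem isIntegral_of_sum_range_eq_zero {x : B} {n : ℕ} (b : ℕ → R)
    (h : x ^ n + ∑ i ∈ range n, algebraMap R B (b i) * x ^ i = 0) : IsIntegral R x := by
  refine ⟨X ^ n + ∑ i ∈ range n, C (b i) * X ^ i, monic_X_pow_add ?_,
    by simpa [eval₂_finsetSum] using h⟩
  refine (degree_sum_le _ _).trans_lt ((Finset.sup_lt_iff (WithBot.bot_lt_coe n)).mpr ?_)
  exact fun i hi => (degree_C_mul_X_pow_le i _).trans_lt (WithBot.coe_lt_coe.mpr (mem_range.mp hi))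

theorem isIntegral_of_isInteger_smul_pow [IsNoetherianRing R] {c : R} (hc : IsSMulRegular B c)
    {ξ : B} (h : ∀ ℓ : ℕ, IsLocalization.IsInteger R (c • ξ ^ ℓ)) : IsIntegral R ξ := by
  let L : B →ₗ[R] B := DistribSMul.toLinearMap R B c
  have hle : (Subalgebra.toSubmodule (Algebra.adjoin R {ξ})).map L ≤
      LinearMap.range (Algebra.linearMap R B) := by
    rw [Algebra.adjoin_eq_span, Submodule.map_span, Submodule.span_le]
    rintro _ ⟨_, hb, rfl⟩
    obtain ⟨ℓ, rfl⟩ := Submonoid.mem_closure_singleton.mp hb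
    exact h ℓ
  have hfg := isNoetherian_submodule.mp inferInstance _ hle
  exact IsIntegral.of_mem_of_fg _ (Submodule.fg_of_fg_map_injective L hc hfg) ξ
    (Algebra.self_mem_adjoin_singleton R ξ)

theorem IsIntegral.exists_isInteger_smul_pow {M : Submonoid R} [hloc : IsLocalization M B] {h : B}
    (hh : IsIntegral R h) : ∃ m : M, ∀ ℓ : ℕ, IsLocalization.IsInteger R ((m : R) • h ^ ℓ) := by
  classical
  obtain ⟨G, hG⟩ := hh.fg_adjoin_singleton
  obtain ⟨m, hm⟩ := IsLocalization.exist_integer_multiples_of_finset M G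
  refine ⟨m, fun ℓ => ?_⟩
  have hmem : h ^ ℓ ∈ Submodule.span R (G : Set B) :=
    hG ▸ pow_mem (Algebra.self_mem_adjoin_singleton R h) ℓ
  generalize h ^ ℓ = q at hmem
  induction hmem using Submodule.span_induction with
  | mem g hg => exact hm g hg
  | zero => simpa using IsLocalization.isInteger_zero
  | add u v _ _ hu hv => simpa [smul_add] using IsLocalization.isInteger_add hu hv
  | smul r u _ hu => simpa [smul_comm _ r] using IsLocalization.isInteger_smul (a := r) hu

variable [IsDomain R] [IsDomain B] (M : Submonoid R) (hM : M ≤ R⁰) [IsLocalization M B]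
include hM

theorem IsFractionRing.of_isLocalization_of_isFractionRing {L : Type*} [CommRing L]
    [Algebra R L] [Algebra B L] [IsScalarTower R B L] [IsFractionRing B L] :
    IsFractionRing R L := by
  have := IsLocalization.localization_localization_isLocalization_of_has_all_units M B⁰ L
    (fun _ hx => hx.mem_nonZeroDivisors)
  convert this
  ext a
  simp [mem_nonZeroDivisors_iff_ne_zero, map_eq_zero_iff _ (IsLocalization.injective B hM)]

theorem isIntegrallyClosed_iff_isIntegrallyClosedIn_of_isLocalization [IsIntegrallyClosed B] :
    IsIntegrallyClosed R ↔ IsIntegrallyClosedIn R B := by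
  have := IsFractionRing.of_isLocalization_of_isFractionRing (B := B) (L := FractionRing B) M hM
  let ι : B →ₐ[R] FractionRing B := IsScalarTower.toAlgHom R B _
  have hι : Function.Injective ι := IsFractionRing.injective B (FractionRing B)
  rw [isIntegrallyClosed_iff_isIntegrallyClosedIn (FractionRing B)]
  refine ⟨AlgHom.isIntegrallyClosedIn ι hι, fun hR => ?_⟩
  refine isIntegrallyClosedIn_iff.mpr ⟨IsFractionRing.injective R _, fun {z} hz => ?_⟩
  obtain ⟨b, rfl⟩ := IsIntegrallyClosed.isIntegral_iff.mp (hz.tower_top : IsIntegral B z)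
  obtain ⟨a, rfl⟩ := IsIntegrallyClosedIn.isIntegral_iff.mp ((isIntegral_algHom_iff ι hι).mp hz)
  exact ⟨a, IsScalarTower.algebraMap_apply R B _ a⟩

end General

theorem coeff_natDegree_eval_C_mul_X {R : Type*} [CommSemiring R] (p : R[X][X]) (x : R) :
    (p.eval (C x * X)).coeff p.natDegree =
      ∑ i ∈ range (p.natDegree + 1), (p.coeff i).coeff (p.natDegree - i) * x ^ i := by
  rw [eval_eq_sum_range, finsetSum_coeff]
  refine sum_congr rfl fun i hi => ?_
  rw [mul_pow, ← C_pow, C_mul_X_pow_eq_monomial]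
  conv_lhs => rw [← Nat.sub_add_cancel (Nat.lt_succ_iff.mp (mem_range.mp hi))]
  rw [coeff_mul_monomial]

section IsIntegralOverIdeal

variable {S : Type*} [CommRing S] {J : Ideal S}

theorem isIntegralOverIdeal_iff_sum_range {y : S} :
    IsIntegralOverIdeal J y ↔ ∃ n, 0 < n ∧ ∃ b : ℕ → S, (∀ i < n, b i ∈ J ^ (n - i)) ∧
      y ^ n + ∑ i ∈ range n, b i * y ^ i = 0 := by
  have reflect (n : ℕ) (f : ℕ → S) : ∑ i ∈ Icc 1 n, f (n - i) = ∑ i ∈ range n, f i := by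
    rw [← Ico_add_one_right_eq_Icc, sum_Ico_reflect _ _ le_rfl, range_eq_Ico]
    simp
  constructor
  · rintro ⟨n, hn, a, ha, h⟩
    refine ⟨n, hn, fun i => a (n - i), fun i hi => ha _ (mem_Icc.mpr ⟨by omega, by omega⟩), ?_⟩
    rw [← reflect n (fun i => a (n - i) * y ^ i), ← h]
    congr 1
    refine sum_congr rfl fun i hi => ?_
    rw [Nat.sub_sub_self (mem_Icc.mp hi).2]
  · rintro ⟨n, hn, b, hb, h⟩
    refine ⟨n, hn, fun i => b (n - i), fun i hi => ?_, by rwa [reflect n (fun i => b i * y ^ i)]⟩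
    obtain ⟨hi1, hin⟩ := mem_Icc.mp hi
    simpa [Nat.sub_sub_self hin] using hb (n - i) (by omega)

theorem eq_zero_of_isIntegralOverIdeal_bot [IsReduced S] {y : S}
    (h : IsIntegralOverIdeal (⊥ : Ideal S) y) : y = 0 := by
  obtain ⟨n, -, b, hb, h⟩ := isIntegralOverIdeal_iff_sum_range.mp h
  have hb0 : ∀ i ∈ range n, b i = 0 := fun i hi => by
    simpa [Ideal.bot_pow (Nat.sub_ne_zero_of_lt (mem_range.mp hi))] using hb i (mem_range.mp hi)
  rw [sum_eq_zero fun i hi => by rw [hb0 i hi, zero_mul], add_zero] at h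
  exact IsNilpotent.eq_zero ⟨n, h⟩

end IsIntegralOverIdeal

section Rees

variable {S : Type*} [CommRing S] (I : Ideal S)

noncomputable def reesAlgebraK : Subalgebra S (FractionRing S)[X] :=
  (reesAlgebra I).map (mapAlg S (FractionRing S))

theorem mapAlg_fractionRing_injective : Function.Injective (mapAlg S (FractionRing S)) := by
  intro p q h
  simpa [mapAlg_eq_map] using map_injective _ (IsFractionRing.injective S (FractionRing S)) h

noncomputable def reesAlgebraEquivK : reesAlgebra I ≃ₐ[S] reesAlgebraK I :=
  (reesAlgebra I).equivMapOfInjective _ mapAlg_fractionRing_injective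

instance [IsNoetherianRing S] : IsNoetherianRing (reesAlgebraK I) :=
  isNoetherianRing_of_ringEquiv _ (reesAlgebraEquivK I).toRingEquiv

variable {I}

theorem coeff_mem_of_mem_reesAlgebraK {f : (FractionRing S)[X]} (hf : f ∈ reesAlgebraK I)
    (j : ℕ) : ∃ y ∈ I ^ j, f.coeff j = algebraMap S (FractionRing S) y := by
  obtain ⟨g, hg, rfl⟩ := hf
  exact ⟨g.coeff j, hg j, by simp [mapAlg_eq_map]⟩

theorem monomial_mem_reesAlgebraK {j : ℕ} {y : S} (hy : y ∈ I ^ j) :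
    monomial j (algebraMap S (FractionRing S) y) ∈ reesAlgebraK I :=
  ⟨monomial j y, reesAlgebra.monomial_mem.mpr hy, by simp [mapAlg_eq_map]⟩

theorem C_pow_natDegree_mul_mem_reesAlgebra {a : S} (ha : a ∈ I) (p : S[X]) :
    C (a ^ p.natDegree) * p ∈ reesAlgebra I := by
  intro i
  rw [coeff_C_mul]
  rcases le_or_gt i p.natDegree with hi | hi
  · exact Ideal.mul_mem_right _ _ (Ideal.pow_le_pow_right hi (Ideal.pow_mem_pow ha _))
  · simp [coeff_eq_zero_of_natDegree_lt hi]

theorem reesAlgebra_bot : reesAlgebra (⊥ : Ideal S) = ⊥ := by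
  refine le_bot_iff.mp fun f hf => Algebra.mem_bot.mpr ⟨f.coeff 0, ?_⟩
  ext (_ | i)
  · simp
  · have := hf (i + 1)
    rw [Ideal.bot_pow i.succ_ne_zero, Ideal.mem_bot] at this
    simp [this]

theorem isIntegrallyClosed_reesAlgebra_bot [IsIntegrallyClosed S] :
    IsIntegrallyClosed (reesAlgebra (⊥ : Ideal S)) :=
  .of_equiv ((Algebra.botEquivOfInjective C_injective).symm.trans
    (Subalgebra.equivOfEq _ _ reesAlgebra_bot.symm)).toRingEquiv

theorem mem_pow_of_isIntegralOverIdeal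
    (hR : IsIntegrallyClosedIn (reesAlgebraK I) (FractionRing S)[X])
    {n : ℕ} {x : S} (hx : IsIntegralOverIdeal (I ^ n) x) : x ∈ I ^ n := by
  obtain ⟨m, -, b, hb, hbx⟩ := isIntegralOverIdeal_iff_sum_range.mp hx
  have hb' (i : ℕ) : monomial (n * (m - i)) (algebraMap S (FractionRing S) (b i)) ∈
      reesAlgebraK I := by
    refine monomial_mem_reesAlgebraK ?_
    rcases lt_or_ge i m with hi | hi
    · rw [pow_mul]
      exact hb i hi
    · simp [Nat.sub_eq_zero_of_le hi]
  have hξ : IsIntegral (reesAlgebraK I) (monomial n (algebraMap S (FractionRing S) x)) := by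
    refine isIntegral_of_sum_range_eq_zero (n := m) (fun i => ⟨_, hb' i⟩) ?_
    have hterm : ∀ i ∈ range m, monomial (n * (m - i)) (algebraMap S _ (b i)) *
        monomial n (algebraMap S (FractionRing S) x) ^ i =
        monomial (n * m) (algebraMap S (FractionRing S) (b i * x ^ i)) := fun i hi => by
      rw [monomial_pow, monomial_mul_monomial, ← mul_add, Nat.sub_add_cancel (mem_range.mp hi).le,
        map_mul (algebraMap S _), map_pow (algebraMap S _)]
    change _ + ∑ i ∈ range m, monomial (n * (m - i)) (algebraMap S _ (b i)) * _ = _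
    rw [sum_congr rfl hterm, monomial_pow, ← map_sum, ← map_pow, ← map_add, ← map_sum, ← map_add,
      hbx, map_zero, map_zero]
  obtain ⟨⟨f, hf⟩, hfx⟩ := hR.isIntegral_iff.mp hξ
  obtain ⟨z, hz, hzf⟩ := coeff_mem_of_mem_reesAlgebraK hf n
  change f = _ at hfx
  rw [hfx, coeff_monomial_same] at hzf
  exact IsFractionRing.injective S (FractionRing S) hzf ▸ hz

variable [IsDomain S]

theorem exists_C_mul_mem_reesAlgebraK (hI : I ≠ ⊥) (g : (FractionRing S)[X]) :
    ∃ c ∈ S⁰, C (algebraMap S (FractionRing S) c) * g ∈ reesAlgebraK I := by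
  obtain ⟨a, ha, ha0⟩ := Submodule.exists_mem_ne_zero_of_ne_bot hI
  obtain ⟨b, hb, hbg⟩ := IsLocalization.integerNormalization_spec S⁰ g
  set p := IsLocalization.integerNormalization S⁰ g
  refine ⟨b * a ^ p.natDegree, mul_mem hb (pow_mem (mem_nonZeroDivisors_of_ne_zero ha0) _),
    ⟨_, C_pow_natDegree_mul_mem_reesAlgebra ha p, ?_⟩⟩
  simp only [RingHom.coe_coe, map_mul, mapAlg_eq_map, map_C, hbg, Algebra.smul_def,
    Polynomial.algebraMap_apply, map_pow]
  ring

theorem isLocalization_reesAlgebraK (hI : I ≠ ⊥) :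
    IsLocalization ((S⁰).map (algebraMap S (reesAlgebraK I))) (FractionRing S)[X] where
  map_units := by
    rintro ⟨_, c, hc, rfl⟩
    exact isUnit_C.mpr (IsUnit.mk0 _ (IsFractionRing.to_map_ne_zero_of_mem_nonZeroDivisors hc))
  surj g := by
    obtain ⟨c, hc, hcg⟩ := exists_C_mul_mem_reesAlgebraK hI g
    exact ⟨⟨⟨_, hcg⟩, ⟨_, Submonoid.mem_map_of_mem _ hc⟩⟩, mul_comm _ _⟩
  exists_of_eq h := ⟨1, by rw [Subtype.ext h]⟩

theorem exists_isIntegralOverIdeal_of_isIntegral_C_mul_X [IsIntegrallyClosed S]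
    {x : FractionRing S} (hx : IsIntegral (reesAlgebraK I) (C x * X)) :
    ∃ y, algebraMap S (FractionRing S) y = x ∧ IsIntegralOverIdeal I y := by
  obtain ⟨p, hp, hpx⟩ := hx
  set q := p.map (algebraMap (reesAlgebraK I) (FractionRing S)[X])
  have hq : q.Monic := hp.map _
  have hqx : q.eval (C x * X) = 0 := by rwa [eval_map]
  have key := coeff_natDegree_eval_C_mul_X q x
  set n := q.natDegree
  have hn : 0 < n := by
    refine Nat.pos_of_ne_zero fun h0 => ?_
    rw [hq.natDegree_eq_zero.mp h0, eval_one] at hqx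
    exact one_ne_zero hqx
  have hqI (i : ℕ) : q.coeff i ∈ reesAlgebraK I := by
    rw [coeff_map]
    exact (p.coeff i).2
  choose b hbI hb using fun i => coeff_mem_of_mem_reesAlgebraK (hqI i) (n - i)
  -- the coefficient of `tⁿ` in `q(x t) = 0`
  have hsum : x ^ n + ∑ i ∈ range n, algebraMap S _ (b i) * x ^ i = 0 := by
    rw [hqx, sum_range_succ, hq.coeff_natDegree, Nat.sub_self, coeff_one_zero, one_mul] at key
    simp only [coeff_zero, hb] at key
    rw [key, add_comm]
  obtain ⟨y, rfl⟩ := IsIntegrallyClosed.isIntegral_iff.mp (isIntegral_of_sum_range_eq_zero b hsum)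
  refine ⟨y, rfl, isIntegralOverIdeal_iff_sum_range.mpr ⟨n, hn, b, fun i _ => hbI i, ?_⟩⟩
  apply IsFractionRing.injective S (FractionRing S)
  simpa using hsum

theorem exists_isIntegralOverIdeal_of_mul_pow_mem [IsNoetherianRing S] [IsIntegrallyClosed S]
    {x : FractionRing S} {c : S} (hc : c ∈ S⁰)
    (h : ∀ ℓ : ℕ, ∃ y ∈ I ^ ℓ, algebraMap S _ c * x ^ ℓ = algebraMap S _ y) :
    ∃ y, algebraMap S (FractionRing S) y = x ∧ IsIntegralOverIdeal I y := by
  refine exists_isIntegralOverIdeal_of_isIntegral_C_mul_X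
    (isIntegral_of_isInteger_smul_pow (c := algebraMap S (reesAlgebraK I) c) ?_ fun ℓ => ?_)
  · intro u v huv
    have hc0 : C (algebraMap S (FractionRing S) c) ≠ 0 :=
      C_ne_zero.mpr (IsFractionRing.to_map_ne_zero_of_mem_nonZeroDivisors hc)
    exact mul_left_cancel₀ hc0 huv
  · obtain ⟨y, hy, hxy⟩ := h ℓ
    refine ⟨⟨_, monomial_mem_reesAlgebraK hy⟩, ?_⟩
    rw [algebraMap_smul, mul_pow, ← C_pow, C_mul_X_pow_eq_monomial, smul_monomial,
      Algebra.smul_def, hxy]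
    rfl

theorem exists_isIntegralOverIdeal_leadingCoeff [IsNoetherianRing S] [IsIntegrallyClosed S]
    (hI : I ≠ ⊥) {h : (FractionRing S)[X]} (hh : IsIntegral (reesAlgebraK I) h) :
    ∃ y, algebraMap S _ y = h.leadingCoeff ∧ IsIntegralOverIdeal (I ^ h.natDegree) y := by
  obtain ⟨⟨_, c, hc, rfl⟩, hm⟩ :=
    hh.exists_isInteger_smul_pow (hloc := isLocalization_reesAlgebraK hI)
  refine exists_isIntegralOverIdeal_of_mul_pow_mem hc fun ℓ => ?_
  obtain ⟨⟨f, hf⟩, hfh⟩ := hm ℓ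
  obtain ⟨y, hy, hyf⟩ := coeff_mem_of_mem_reesAlgebraK hf (ℓ * h.natDegree)
  refine ⟨y, by rwa [← pow_mul, mul_comm], ?_⟩
  change f = _ at hfh
  rw [← hyf, hfh, algebraMap_smul, coeff_smul, coeff_pow_mul_natDegree, Algebra.smul_def]

theorem mem_reesAlgebraK_of_isIntegral [IsNoetherianRing S] [IsIntegrallyClosed S] (hI : I ≠ ⊥)
    (H : ∀ n : ℕ, 0 < n → ∀ x : S, IsIntegralOverIdeal (I ^ n) x → x ∈ I ^ n)
    {h : (FractionRing S)[X]} (hh : IsIntegral (reesAlgebraK I) h) : h ∈ reesAlgebraK I := by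
  induction hd : h.natDegree using Nat.strong_induction_on generalizing h with
  | _ d IH =>
  obtain ⟨y, hy, hyI⟩ := exists_isIntegralOverIdeal_leadingCoeff hI hh
  have hyd : y ∈ I ^ h.natDegree := by
    rcases Nat.eq_zero_or_pos h.natDegree with h0 | hpos
    · simp [h0]
    · exact H _ hpos y hyI
  have hlead : monomial h.natDegree h.leadingCoeff ∈ reesAlgebraK I :=
    hy ▸ monomial_mem_reesAlgebraK hyd
  have hrest : h.eraseLead ∈ reesAlgebraK I := by
    rcases h.eraseLead_natDegree_lt_or_eraseLead_eq_zero with hlt | h0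
    · refine IH _ (hd ▸ hlt) ?_ rfl
      rw [← self_sub_monomial_natDegree_leadingCoeff]
      exact hh.sub (isIntegral_algebraMap (x := (⟨_, hlead⟩ : reesAlgebraK I)))
    · exact h0 ▸ zero_mem _
  simpa using add_mem hrest hlead

theorem isIntegrallyClosedIn_reesAlgebraK_iff [IsNoetherianRing S] [IsIntegrallyClosed S]
    (hI : I ≠ ⊥) :
    IsIntegrallyClosedIn (reesAlgebraK I) (FractionRing S)[X] ↔
      ∀ n : ℕ, 0 < n → ∀ x : S, IsIntegralOverIdeal (I ^ n) x → x ∈ I ^ n :=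
  ⟨fun h _ _ _ hx => mem_pow_of_isIntegralOverIdeal h hx, fun H =>
    isIntegrallyClosedIn_iff.mpr ⟨Subtype.val_injective, fun hh =>
      ⟨⟨_, mem_reesAlgebraK_of_isIntegral hI H hh⟩, rfl⟩⟩⟩

end Rees

theorem stmt3 (S : Type*) [CommRing S] [IsDomain S] [IsNoetherianRing S]
    [IsIntegrallyClosed S] (I : Ideal S) :
    IsIntegrallyClosed (reesAlgebra I) ↔
      ∀ n : ℕ, 0 < n → ∀ x : S, IsIntegralOverIdeal (I ^ n) x → x ∈ I ^ n := by
  rcases eq_or_ne I ⊥ with rfl | hI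
  · refine iff_of_true isIntegrallyClosed_reesAlgebra_bot fun n hn x hx => ?_
    rw [Ideal.bot_pow hn.ne'] at hx ⊢
    exact (eq_zero_of_isIntegralOverIdeal_bot hx).symm ▸ zero_mem _
  have := isLocalization_reesAlgebraK hI
  have hinj : Function.Injective (algebraMap S (reesAlgebraK I)) := fun _ _ h =>
    IsFractionRing.injective S (FractionRing S) (C_injective (congrArg Subtype.val h))
  let e := (reesAlgebraEquivK I).toRingEquiv
  calc IsIntegrallyClosed (reesAlgebra I) ↔ IsIntegrallyClosed (reesAlgebraK I) :=
        ⟨fun _ => .of_equiv e, fun _ => .of_equiv (R := reesAlgebraK I) e.symm⟩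
    _ ↔ IsIntegrallyClosedIn (reesAlgebraK I) (FractionRing S)[X] :=
        isIntegrallyClosed_iff_isIntegrallyClosedIn_of_isLocalization _
          (map_le_nonZeroDivisors_of_injective _ hinj le_rfl)
    _ ↔ _ := isIntegrallyClosedIn_reesAlgebraK_iff hI
end

section
/- Let $m \geq 1$, $n$ with $1 \leq n \leq m$, let $A_0,\dots,A_m$ be positive integers with lcm $A$, and $a_i = A/A_i$. Let $p \geq 2$ and let $c_0,\dots,c_m$ be nonnegative integers with $\sum_i c_i A_i \geq pmA$, with $c_i \geq a_i$ for $0 \leq i < n$. For $i < n$ let $k_i$ satisfy $k_i a_i \leq c_i < (k_i+1)a_i$. If $k_0 + \cdots + k_{n-1} \leq m - 1$, then there exists $j$ with $n \leq j \leq m$ and $c_j \geq a_j$. -/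
theorem stmt6 (m n p : ℕ) (hm : 1 ≤ m) (hn1 : 1 ≤ n) (hnm : n ≤ m) (hp : 2 ≤ p)
    (A : ℕ → ℕ) (hApos : ∀ i ≤ m, 0 < A i)
    (L : ℕ) (hL : L = (Finset.range (m + 1)).lcm A)
    (a : ℕ → ℕ) (ha : ∀ i ≤ m, a i = L / A i)
    (c : ℕ → ℕ)
    (hc : p * m * L ≤ ∑ i ∈ Finset.range (m + 1), c i * A i)
    (hca : ∀ i < n, a i ≤ c i)
    (K : ℕ → ℕ)
    (hK : ∀ i < n, 1 ≤ K i ∧ K i * a i ≤ c i ∧ c i < (K i + 1) * a i)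
    (hsum : ∑ i ∈ Finset.range n, K i ≤ m - 1) :
    ∃ j, n ≤ j ∧ j ≤ m ∧ a j ≤ c j := by
  by_contra h
  push_neg at h
  have hdvd : ∀ i ≤ m, A i ∣ L := by
    intro i hi
    rw [hL]
    exact Finset.dvd_lcm (Finset.mem_range.mpr (Nat.lt_succ_of_le hi))
  have haA : ∀ i ≤ m, a i * A i = L := by
    intro i hi
    rw [ha i hi]
    exact Nat.div_mul_cancel (hdvd i hi)
  -- strict termwise bound
  have key : ∀ i ∈ Finset.range (m + 1),
      c i * A i < (if i < n then K i + 1 else 1) * L := by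
    intro i hi
    have him : i ≤ m := Nat.lt_succ_iff.mp (Finset.mem_range.mp hi)
    by_cases hin : i < n
    · rw [if_pos hin]
      have := (hK i hin).2.2
      calc c i * A i < ((K i + 1) * a i) * A i :=
            (Nat.mul_lt_mul_right (hApos i him)).mpr this
        _ = (K i + 1) * L := by rw [mul_assoc, haA i him]
    · rw [if_neg hin, one_mul]
      have hci : c i < a i := h i (le_of_not_gt hin) him
      calc c i * A i < a i * A i := (Nat.mul_lt_mul_right (hApos i him)).mpr hci
        _ = L := haA i him
  have hne : (Finset.range (m + 1)).Nonempty := ⟨0, by simp⟩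
  have hlt : ∑ i ∈ Finset.range (m + 1), c i * A i
      < ∑ i ∈ Finset.range (m + 1), (if i < n then K i + 1 else 1) * L :=
    Finset.sum_lt_sum_of_nonempty hne key
  have hsplit : ∑ i ∈ Finset.range (m + 1), (if i < n then K i + 1 else 1) * L
      = ((∑ i ∈ Finset.range n, K i) + n + (m + 1 - n)) * L := by
    rw [← Finset.sum_range_add_sum_Ico _ (by omega : n ≤ m + 1)]
    have h1 : ∑ i ∈ Finset.range n, (if i < n then K i + 1 else 1) * L
        = ((∑ i ∈ Finset.range n, K i) + n) * L := by
      rw [Finset.sum_congr rfl (fun i hi => by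
        rw [if_pos (Finset.mem_range.mp hi)]), ← Finset.sum_mul, Finset.sum_add_distrib]
      simp
    have h2 : ∑ i ∈ Finset.Ico n (m + 1), (if i < n then K i + 1 else 1) * L
        = (m + 1 - n) * L := by
      rw [Finset.sum_congr rfl (fun i hi => by
        rw [if_neg (not_lt.mpr (Finset.mem_Ico.mp hi).1)]), Finset.sum_const,
        Nat.card_Ico, smul_eq_mul, one_mul]
    rw [h1, h2, ← add_mul]
  rw [hsplit] at hlt
  have hbound : ((∑ i ∈ Finset.range n, K i) + n + (m + 1 - n)) * L ≤ p * m * L := by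
    apply Nat.mul_le_mul_right
    calc (∑ i ∈ Finset.range n, K i) + n + (m + 1 - n) ≤ (m - 1) + n + (m + 1 - n) := by
          omega
      _ ≤ 2 * m := by omega
      _ ≤ p * m := Nat.mul_le_mul_right m hp
  omega
end

section
/- Let $k$ be a field and $R = k[x,y,z]/(x^a + y^b + z^c)$ a domain, where $x, y, z$ have weights $bc$, $ac$, $ab$ respectively (so the relation is homogeneous of degree $abc$). Then the ideal $I = R_{\geq 2abc}$ satisfies $I^p = R_{\geq 2abcp}$ for all $p \geq 1$, and hence is a normal ideal when $R$ is normal. -/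
set_option synthInstance.maxHeartbeats 400000
set_option maxHeartbeats 800000

open MvPolynomial

/-- Extract a sub-exponent of weighted degree exactly `a*b*c`. -/
lemma extract1 (a b c i j l : ℕ) (ha : 1 ≤ a) (hb : 1 ≤ b) (hc : 1 ≤ c)
    (h : 3 * (a * b * c) ≤ i * (b * c) + j * (a * c) + l * (a * b)) :
    ∃ s t u, s ≤ i ∧ t ≤ j ∧ u ≤ l ∧
      s * (b * c) + t * (a * c) + u * (a * b) = a * b * c := by
  by_cases hia : a ≤ i
  · exact ⟨a, 0, 0, hia, Nat.zero_le _, Nat.zero_le _, by ring⟩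
  by_cases hjb : b ≤ j
  · exact ⟨0, b, 0, Nat.zero_le _, hjb, Nat.zero_le _, by ring⟩
  by_cases hlc : c ≤ l
  · exact ⟨0, 0, c, Nat.zero_le _, Nat.zero_le _, hlc, by ring⟩
  exfalso
  have h1 : (i + 1) * (b * c) ≤ a * (b * c) := Nat.mul_le_mul_right _ (by omega)
  have h2 : (j + 1) * (a * c) ≤ b * (a * c) := Nat.mul_le_mul_right _ (by omega)
  have h3 : (l + 1) * (a * b) ≤ c * (a * b) := Nat.mul_le_mul_right _ (by omega)
  have hbc : 1 ≤ b * c := Nat.one_le_iff_ne_zero.2 (by positivity)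
  have hac : 1 ≤ a * c := Nat.one_le_iff_ne_zero.2 (by positivity)
  have hab : 1 ≤ a * b := Nat.one_le_iff_ne_zero.2 (by positivity)
  nlinarith [h, h1, h2, h3]

/-- Extract a sub-exponent of weighted degree exactly `2*(a*b*c)`. -/
lemma extract2 (a b c i j l : ℕ) (ha : 1 ≤ a) (hb : 1 ≤ b) (hc : 1 ≤ c)
    (h : 4 * (a * b * c) ≤ i * (b * c) + j * (a * c) + l * (a * b)) :
    ∃ s t u, s ≤ i ∧ t ≤ j ∧ u ≤ l ∧
      s * (b * c) + t * (a * c) + u * (a * b) = 2 * (a * b * c) := by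
  obtain ⟨s1, t1, u1, hs1, ht1, hu1, hv1⟩ :=
    extract1 a b c i j l ha hb hc (le_trans (Nat.mul_le_mul_right _ (by norm_num)) h)
  obtain ⟨i2, hi2⟩ : ∃ i2, i = s1 + i2 := ⟨i - s1, by omega⟩
  obtain ⟨j2, hj2⟩ : ∃ j2, j = t1 + j2 := ⟨j - t1, by omega⟩
  obtain ⟨l2, hl2⟩ : ∃ l2, l = u1 + l2 := ⟨l - u1, by omega⟩
  have h2 : 3 * (a * b * c) ≤ i2 * (b * c) + j2 * (a * c) + l2 * (a * b) := by
    subst hi2 hj2 hl2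
    have expand : (s1 + i2) * (b * c) + (t1 + j2) * (a * c) + (u1 + l2) * (a * b)
        = (s1 * (b * c) + t1 * (a * c) + u1 * (a * b))
          + (i2 * (b * c) + j2 * (a * c) + l2 * (a * b)) := by ring
    rw [expand, hv1] at h
    omega
  obtain ⟨s2, t2, u2, hs2, ht2, hu2, hv2⟩ :=
    extract1 a b c i2 j2 l2 ha hb hc h2
  exact ⟨s1 + s2, t1 + t2, u1 + u2, by omega, by omega, by omega, by
    have : (s1 + s2) * (b * c) + (t1 + t2) * (a * c) + (u1 + u2) * (a * b)
        = (s1 * (b * c) + t1 * (a * c) + u1 * (a * b))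
          + (s2 * (b * c) + t2 * (a * c) + u2 * (a * b)) := by ring
    rw [this, hv1, hv2]; ring⟩

lemma weight_eq (a b c : ℕ) (m : Fin 3 →₀ ℕ) :
    Finsupp.weight ![b * c, a * c, a * b] m
      = m 0 * (b * c) + m 1 * (a * c) + m 2 * (a * b) := by
  rw [Finsupp.weight_apply, Finsupp.sum_fintype]
  · simp [Fin.sum_univ_three]
  · intro i; simp

lemma triple_apply (s t u : ℕ) (x : Fin 3) :
    (Finsupp.single (0 : Fin 3) s + Finsupp.single 1 t
      + Finsupp.single 2 u : Fin 3 →₀ ℕ) x = ![s, t, u] x := by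
  fin_cases x <;> simp [Finsupp.single_apply]

lemma weight_triple (a b c s t u : ℕ) :
    Finsupp.weight ![b * c, a * c, a * b]
      (Finsupp.single (0 : Fin 3) s + Finsupp.single 1 t + Finsupp.single 2 u)
      = s * (b * c) + t * (a * c) + u * (a * b) := by
  rw [weight_eq, triple_apply, triple_apply, triple_apply]
  simp

theorem test : True := trivial

lemma triple_eq_self (m : Fin 3 →₀ ℕ) :
    Finsupp.single (0 : Fin 3) (m 0) + Finsupp.single 1 (m 1)
      + Finsupp.single 2 (m 2) = m := by
  ext x
  rw [triple_apply]
  fin_cases x <;> rfl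

lemma monomial_mem_pow {k : Type*} [CommSemiring k] (a b c : ℕ)
    (ha : 1 ≤ a) (hb : 1 ≤ b) (hc : 1 ≤ c) :
    ∀ (p : ℕ) (m : Fin 3 →₀ ℕ) (r : k),
      2 * (a * b * c) * p ≤ Finsupp.weight ![b * c, a * c, a * b] m →
      monomial m r ∈ (Ideal.span {f : MvPolynomial (Fin 3) k |
        ∃ d : ℕ, 2 * (a * b * c) ≤ d ∧
          IsWeightedHomogeneous ![b * c, a * c, a * b] f d}) ^ p := by
  intro p
  induction p with
  | zero => intro m r _; simp
  | succ p ih =>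
    intro m r hm
    rcases Nat.eq_zero_or_pos p with rfl | hp
    · rw [pow_one]
      refine Ideal.subset_span ⟨Finsupp.weight ![b * c, a * c, a * b] m, ?_,
        isWeightedHomogeneous_monomial _ _ _ rfl⟩
      omega
    · -- degree ≥ 4abc, extract exactly 2abc
      have hw := weight_eq a b c m
      have h4 : 4 * (a * b * c) ≤ m 0 * (b * c) + m 1 * (a * c) + m 2 * (a * b) := by
        rw [← hw]
        calc 4 * (a * b * c) = 2 * (a * b * c) * 2 := by ring
          _ ≤ 2 * (a * b * c) * (p + 1) := Nat.mul_le_mul_left _ (by omega)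
          _ ≤ _ := hm
      obtain ⟨s, t, u, hs, ht, hu, hv⟩ := extract2 a b c (m 0) (m 1) (m 2) ha hb hc h4
      set m1 : Fin 3 →₀ ℕ := Finsupp.single (0 : Fin 3) s + Finsupp.single 1 t
        + Finsupp.single 2 u with hm1
      set m2 : Fin 3 →₀ ℕ := Finsupp.single (0 : Fin 3) (m 0 - s)
        + Finsupp.single 1 (m 1 - t) + Finsupp.single 2 (m 2 - u) with hm2
      have hsplit : m1 + m2 = m := by
        ext x
        rw [Finsupp.add_apply, hm1, hm2, triple_apply, triple_apply]
        fin_cases x <;> simp <;> omega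
      have hw1 : Finsupp.weight ![b * c, a * c, a * b] m1 = 2 * (a * b * c) := by
        rw [hm1, weight_triple, hv]
      have hw2 : 2 * (a * b * c) * p ≤ Finsupp.weight ![b * c, a * c, a * b] m2 := by
        have hadd : Finsupp.weight ![b * c, a * c, a * b] m1
            + Finsupp.weight ![b * c, a * c, a * b] m2
            = Finsupp.weight ![b * c, a * c, a * b] m := by
          rw [← map_add, hsplit]
        have : 2 * (a * b * c) * (p + 1) = 2 * (a * b * c) * p + 2 * (a * b * c) := by ring
        omega
      have hmon : (monomial m r : MvPolynomial (Fin 3) k)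
          = monomial m2 r * monomial m1 1 := by
        rw [monomial_mul, mul_one, ← hsplit, add_comm]
      rw [hmon, pow_succ]
      exact Ideal.mul_mem_mul (ih m2 r hw2)
        (Ideal.subset_span ⟨2 * (a * b * c), le_refl _,
          isWeightedHomogeneous_monomial _ _ _ hw1⟩)

lemma span_pow_eq {k : Type*} [CommSemiring k] (a b c : ℕ)
    (ha : 1 ≤ a) (hb : 1 ≤ b) (hc : 1 ≤ c) (p : ℕ) (hp : 1 ≤ p) :
    (Ideal.span {f : MvPolynomial (Fin 3) k |
        ∃ d : ℕ, 2 * (a * b * c) ≤ d ∧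
          IsWeightedHomogeneous ![b * c, a * c, a * b] f d}) ^ p
      = Ideal.span {f : MvPolynomial (Fin 3) k |
        ∃ d : ℕ, 2 * (a * b * c) * p ≤ d ∧
          IsWeightedHomogeneous ![b * c, a * c, a * b] f d} := by
  apply le_antisymm
  · -- A^p ≤ B_p by induction on p ≥ 1
    induction p, hp using Nat.le_induction with
    | base =>
      rw [pow_one]
      apply Ideal.span_mono
      rintro f ⟨d, hd, hf⟩
      exact ⟨d, by omega, hf⟩
    | succ p hp ih =>
      rw [pow_succ]
      calc _ ≤ (Ideal.span {f : MvPolynomial (Fin 3) k |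
            ∃ d : ℕ, 2 * (a * b * c) * p ≤ d ∧
              IsWeightedHomogeneous ![b * c, a * c, a * b] f d})
            * Ideal.span {f : MvPolynomial (Fin 3) k |
            ∃ d : ℕ, 2 * (a * b * c) ≤ d ∧
              IsWeightedHomogeneous ![b * c, a * c, a * b] f d} :=
          Ideal.mul_mono_left ih
        _ ≤ _ := by
          rw [Ideal.span_mul_span']
          apply Ideal.span_le.2
          rintro x ⟨f, ⟨d1, hd1, hf⟩, g, ⟨d2, hd2, hg⟩, rfl⟩
          apply Ideal.subset_span
          exact ⟨d1 + d2, by nlinarith, hf.mul hg⟩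
  · -- B_p ≤ A^p via monomials
    apply Ideal.span_le.2
    rintro f ⟨d, hd, hf⟩
    rw [f.as_sum]
    apply Ideal.sum_mem
    intro m hm
    apply monomial_mem_pow a b c ha hb hc
    rw [hf (mem_support_iff.1 hm)]
    exact hd


theorem stmt11 (k : Type*) [Field k] (a b c : ℕ)
    (ha : 1 ≤ a) (hb : 1 ≤ b) (hc : 1 ≤ c)
    (w : Fin 3 → ℕ) (hw : w = ![b * c, a * c, a * b])
    (J : Ideal (MvPolynomial (Fin 3) k))
    (hJ : J = Ideal.span {X 0 ^ a + X 1 ^ b + X 2 ^ c})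
    [IsDomain (MvPolynomial (Fin 3) k ⧸ J)]
    (I : Ideal (MvPolynomial (Fin 3) k ⧸ J))
    (hI : I = Ideal.map (Ideal.Quotient.mk J)
      (Ideal.span {f | ∃ d : ℕ, 2 * (a * b * c) ≤ d ∧ IsWeightedHomogeneous w f d}))
    (p : ℕ) (hp : 1 ≤ p) :
    I ^ p = Ideal.map (Ideal.Quotient.mk J)
      (Ideal.span {f | ∃ d : ℕ, 2 * (a * b * c) * p ≤ d ∧ IsWeightedHomogeneous w f d}) := by
  subst hw hI
  rw [← Ideal.map_pow, span_pow_eq a b c ha hb hc p hp]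
end

section
/- Let $k$ be a field and $R = k[x,y,z]$ graded with $\deg x = 1$, $\deg y = 1$, $\deg z = 2$. Then $R_{\geq 4} = (x^4, x^3y, x^2y^2, x^2z, xy^3, xyz, y^4, y^2z, z^2)$ and this ideal is normal, i.e., all its positive powers are integrally closed. -/
set_option synthInstance.maxHeartbeats 400000
set_option maxHeartbeats 800000

open MvPolynomial

noncomputable section AuxStmt12

abbrev Wt3 : Fin 3 → ℕ := ![1, 1, 2]

lemma wt3_eval (m : Fin 3 →₀ ℕ) :
    Finsupp.weight Wt3 m = m 0 + m 1 + 2 * m 2 := by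
  rw [Finsupp.weight_apply, Finsupp.sum_fintype]
  · simp [Fin.sum_univ_three, Wt3]
    ring
  · intro i; simp

variable (k : Type*) [Field k]

/-- The ideal of polynomials all of whose monomials have weighted degree `≥ N`. -/
def Jdeg (N : ℕ) : Ideal (MvPolynomial (Fin 3) k) where
  carrier := {p | ∀ m : Fin 3 →₀ ℕ, coeff m p ≠ 0 → N ≤ Finsupp.weight Wt3 m}
  zero_mem' := by intro m hm; simp at hm
  add_mem' := by
    intro p q hp hq m hm
    by_cases h : coeff m p = 0
    · exact hq m (by simpa [coeff_add, h] using hm)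
    · exact hp m h
  smul_mem' := by
    intro r p hp m hm
    rw [smul_eq_mul, coeff_mul] at hm
    obtain ⟨x, hx, hne⟩ := Finset.exists_ne_zero_of_sum_ne_zero hm
    have hx2 : coeff x.2 p ≠ 0 := fun h => hne (by simp [h])
    have := Finset.HasAntidiagonal.mem_antidiagonal.mp hx
    calc N ≤ Finsupp.weight Wt3 x.2 := hp x.2 hx2
      _ ≤ Finsupp.weight Wt3 x.1 + Finsupp.weight Wt3 x.2 := Nat.le_add_left _ _
      _ = Finsupp.weight Wt3 m := by rw [← map_add, this]

lemma mem_Jdeg {N : ℕ} {p : MvPolynomial (Fin 3) k} :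
    p ∈ Jdeg k N ↔ ∀ m : Fin 3 →₀ ℕ, coeff m p ≠ 0 → N ≤ Finsupp.weight Wt3 m :=
  Iff.rfl

lemma Jdeg_anti {N M : ℕ} (h : N ≤ M) : Jdeg k M ≤ Jdeg k N := by
  intro p hp m hm
  exact le_trans h (hp m hm)

lemma Jdeg_mul {A B : ℕ} {p q : MvPolynomial (Fin 3) k}
    (hp : p ∈ Jdeg k A) (hq : q ∈ Jdeg k B) : p * q ∈ Jdeg k (A + B) := by
  intro m hm
  rw [coeff_mul] at hm
  obtain ⟨x, hx, hne⟩ := Finset.exists_ne_zero_of_sum_ne_zero hm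
  have hx1 : coeff x.1 p ≠ 0 := fun h => hne (by simp [h])
  have hx2 : coeff x.2 q ≠ 0 := fun h => hne (by simp [h])
  have hsum := Finset.HasAntidiagonal.mem_antidiagonal.mp hx
  calc A + B ≤ Finsupp.weight Wt3 x.1 + Finsupp.weight Wt3 x.2 :=
        Nat.add_le_add (hp x.1 hx1) (hq x.2 hx2)
    _ = Finsupp.weight Wt3 m := by rw [← map_add, hsum]

lemma Jdeg_pow {A : ℕ} {p : MvPolynomial (Fin 3) k} (hp : p ∈ Jdeg k A) (j : ℕ) :
    p ^ j ∈ Jdeg k (A * j) := by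
  induction j with
  | zero => intro m hm; exact Nat.zero_le _
  | succ j ih =>
      have := Jdeg_mul k ih hp
      rw [← pow_succ] at this
      have hE : A * j + A = A * (j + 1) := by ring
      rwa [hE] at this

lemma Ideal.pow_le_Jdeg {A : ℕ} {I : Ideal (MvPolynomial (Fin 3) k)}
    (hI : I ≤ Jdeg k A) (n : ℕ) : I ^ n ≤ Jdeg k (A * n) := by
  induction n with
  | zero => intro p _ m _; exact Nat.zero_le _
  | succ n ih =>
      rw [pow_succ]
      refine le_trans (Ideal.mul_le.mpr ?_) (le_refl _)
      intro r hr s hs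
      have := Jdeg_mul k (ih hr) (hI hs)
      have hE : A * n + A = A * (n + 1) := by ring
      rwa [hE] at this

/-- The nine-generator ideal. -/
def span9 : Ideal (MvPolynomial (Fin 3) k) :=
  Ideal.span {X 0 ^ 4, X 0 ^ 3 * X 1, X 0 ^ 2 * X 1 ^ 2, X 0 ^ 2 * X 2,
      X 0 * X 1 ^ 3, X 0 * X 1 * X 2, X 1 ^ 4, X 1 ^ 2 * X 2, X 2 ^ 2}

lemma mono_eq (a b c : ℕ) :
    (monomial (Finsupp.single (0 : Fin 3) a + Finsupp.single 1 b + Finsupp.single 2 c) (1 : k)) =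
      X 0 ^ a * X 1 ^ b * X 2 ^ c := by
  simp [X_pow_eq_monomial, monomial_mul]

lemma mem_span9_of_eq {p q : MvPolynomial (Fin 3) k} (h : p = q)
    (hq : q ∈ ({X 0 ^ 4, X 0 ^ 3 * X 1, X 0 ^ 2 * X 1 ^ 2, X 0 ^ 2 * X 2,
      X 0 * X 1 ^ 3, X 0 * X 1 * X 2, X 1 ^ 4, X 1 ^ 2 * X 2, X 2 ^ 2} :
        Set (MvPolynomial (Fin 3) k))) : p ∈ span9 k := by
  rw [h]; exact Ideal.subset_span hq

lemma extract (m : Fin 3 →₀ ℕ) (hm : 4 ≤ Finsupp.weight Wt3 m) :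
    ∃ a b c : ℕ, a ≤ m 0 ∧ b ≤ m 1 ∧ c ≤ m 2 ∧ a + b + 2 * c = 4 ∧
      (X 0 ^ a * X 1 ^ b * X 2 ^ c : MvPolynomial (Fin 3) k) ∈ span9 k := by
  rw [wt3_eval] at hm
  rcases le_or_gt 2 (m 2) with h2 | h2
  · exact ⟨0, 0, 2, Nat.zero_le _, Nat.zero_le _, h2, by norm_num,
      mem_span9_of_eq k (q := X 2 ^ 2) (by ring) (by simp)⟩
  rcases le_or_gt 1 (m 2) with h1 | h1
  · -- m 2 = 1
    rcases le_or_gt 2 (m 0) with ha | ha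
    · exact ⟨2, 0, 1, ha, Nat.zero_le _, h1, by norm_num,
        mem_span9_of_eq k (q := X 0 ^ 2 * X 2) (by ring) (by simp)⟩
    rcases le_or_gt 1 (m 0) with ha1 | ha1
    · exact ⟨1, 1, 1, ha1, by omega, h1, by norm_num,
        mem_span9_of_eq k (q := X 0 * X 1 * X 2) (by ring) (by simp)⟩
    · exact ⟨0, 2, 1, Nat.zero_le _, by omega, h1, by norm_num,
        mem_span9_of_eq k (q := X 1 ^ 2 * X 2) (by ring) (by simp)⟩
  · -- m 2 = 0
    have hab : 4 ≤ m 0 + m 1 := by omega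
    rcases le_or_gt 4 (m 0) with h | h
    · exact ⟨4, 0, 0, h, Nat.zero_le _, Nat.zero_le _, by norm_num,
        mem_span9_of_eq k (q := X 0 ^ 4) (by ring) (by simp)⟩
    rcases le_or_gt 3 (m 0) with h | h
    · exact ⟨3, 1, 0, h, by omega, Nat.zero_le _, by norm_num,
        mem_span9_of_eq k (q := X 0 ^ 3 * X 1) (by ring) (by simp)⟩
    rcases le_or_gt 2 (m 0) with h | h
    · exact ⟨2, 2, 0, h, by omega, Nat.zero_le _, by norm_num,
        mem_span9_of_eq k (q := X 0 ^ 2 * X 1 ^ 2) (by ring) (by simp)⟩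
    rcases le_or_gt 1 (m 0) with h | h
    · exact ⟨1, 3, 0, h, by omega, Nat.zero_le _, by norm_num,
        mem_span9_of_eq k (q := X 0 * X 1 ^ 3) (by ring) (by simp)⟩
    · exact ⟨0, 4, 0, Nat.zero_le _, by omega, Nat.zero_le _, by norm_num,
        mem_span9_of_eq k (q := X 1 ^ 4) (by ring) (by simp)⟩


lemma monomial_mem_pow_s12 (n : ℕ) (m : Fin 3 →₀ ℕ) (hm : 4 * n ≤ Finsupp.weight Wt3 m) (c : k) :
    monomial m c ∈ (span9 k) ^ n := by
  induction n generalizing m with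
  | zero => simp
  | succ n ih =>
    obtain ⟨a, b, cc, ha, hb, hc, hsum, hmem⟩ :=
      extract k m (le_trans (by omega) hm)
    set e : Fin 3 →₀ ℕ := Finsupp.single (0 : Fin 3) a + Finsupp.single 1 b + Finsupp.single 2 cc with he
    have he0 : e 0 = a := by simp [he, Finsupp.single_apply]
    have he1 : e 1 = b := by simp [he, Finsupp.single_apply]
    have he2 : e 2 = cc := by simp [he, Finsupp.single_apply]
    have hele : e ≤ m := by
      intro i
      fin_cases i
      · show e 0 ≤ m 0; rw [he0]; exact ha
      · show e 1 ≤ m 1; rw [he1]; exact hb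
      · show e 2 ≤ m 2; rw [he2]; exact hc
    have hsplit : e + (m - e) = m := add_tsub_cancel_of_le hele
    have hwe : Finsupp.weight Wt3 e = 4 := by
      rw [wt3_eval, he0, he1, he2]; omega
    have hwrest : 4 * n ≤ Finsupp.weight Wt3 (m - e) := by
      have : Finsupp.weight Wt3 e + Finsupp.weight Wt3 (m - e) = Finsupp.weight Wt3 m := by
        rw [← map_add, hsplit]
      omega
    have hfact : monomial m c = (X 0 ^ a * X 1 ^ b * X 2 ^ cc) * monomial (m - e) c := by
      rw [← mono_eq k, monomial_mul, one_mul, hsplit]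
    rw [hfact, pow_succ, mul_comm ((span9 k) ^ n) (span9 k)]
    exact Ideal.mul_mem_mul hmem (ih (m - e) hwrest)

lemma Jdeg_le_span9_pow (n : ℕ) : Jdeg k (4 * n) ≤ (span9 k) ^ n := by
  intro p hp
  rw [p.as_sum]
  refine Ideal.sum_mem _ ?_
  intro m hm
  exact monomial_mem_pow_s12 k n m (hp m (mem_support_iff.mp hm)) _

lemma homog_gen (a b c : ℕ) :
    IsWeightedHomogeneous Wt3 ((X 0 : MvPolynomial (Fin 3) k) ^ a * X 1 ^ b * X 2 ^ c)
      (a + b + 2 * c) := by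
  rw [← mono_eq k]
  apply isWeightedHomogeneous_monomial
  rw [wt3_eval]
  simp [Finsupp.single_apply]

lemma homog_pow {p : MvPolynomial (Fin 3) k} {d : ℕ}
    (hp : IsWeightedHomogeneous Wt3 p d) (N : ℕ) :
    IsWeightedHomogeneous Wt3 (p ^ N) (N * d) := by
  induction N with
  | zero => simpa using isWeightedHomogeneous_one _ _
  | succ N ih =>
      have := ih.mul hp
      rw [pow_succ] at *
      have hE : N * d + d = (N + 1) * d := by ring
      rwa [hE] at this

lemma homog_mem_Jdeg {p : MvPolynomial (Fin 3) k} {d N : ℕ}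
    (hp : IsWeightedHomogeneous Wt3 p d) (h : N ≤ d) : p ∈ Jdeg k N := by
  intro m hm
  rw [hp hm]; exact h

end AuxStmt12

theorem stmt12 (k : Type*) [Field k]
    (w : Fin 3 → ℕ) (hw : w = ![1, 1, 2])
    (I : Ideal (MvPolynomial (Fin 3) k))
    (hI : I = Ideal.span {f | ∃ d : ℕ, 4 ≤ d ∧ IsWeightedHomogeneous w f d}) :
    I = Ideal.span {X 0 ^ 4, X 0 ^ 3 * X 1, X 0 ^ 2 * X 1 ^ 2, X 0 ^ 2 * X 2,
        X 0 * X 1 ^ 3, X 0 * X 1 * X 2, X 1 ^ 4, X 1 ^ 2 * X 2, X 2 ^ 2} ∧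
      ∀ n : ℕ, 1 ≤ n → ∀ x : MvPolynomial (Fin 3) k,
        IsIntegralOverIdeal (I ^ n) x → x ∈ I ^ n := by
  classical
  subst hw
  have hWt : (![1, 1, 2] : Fin 3 → ℕ) = Wt3 := rfl
  rw [hWt] at hI
  have hIJ : I ≤ Jdeg k 4 := by
    rw [hI, Ideal.span_le]
    rintro f ⟨dd, hdd, hf⟩
    exact homog_mem_Jdeg k hf hdd
  have hIspan : I = span9 k := by
    apply le_antisymm
    · rw [hI, Ideal.span_le]
      rintro f ⟨dd, hdd, hf⟩
      have h1 : f ∈ Jdeg k (4 * 1) := by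
        simpa using homog_mem_Jdeg k hf hdd
      have h2 := Jdeg_le_span9_pow k 1 h1
      simpa using h2
    · rw [hI]
      unfold span9
      rw [Ideal.span_le]
      rintro g hg
      apply Ideal.subset_span
      simp only [Set.mem_insert_iff, Set.mem_singleton_iff] at hg
      rcases hg with h|h|h|h|h|h|h|h|h <;> subst h
      · exact ⟨4, le_refl 4, by simpa using homog_gen k 4 0 0⟩
      · exact ⟨4, le_refl 4, by simpa using homog_gen k 3 1 0⟩
      · exact ⟨4, le_refl 4, by simpa using homog_gen k 2 2 0⟩
      · exact ⟨4, le_refl 4, by simpa using homog_gen k 2 0 1⟩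
      · exact ⟨4, le_refl 4, by simpa using homog_gen k 1 3 0⟩
      · exact ⟨4, le_refl 4, by simpa using homog_gen k 1 1 1⟩
      · exact ⟨4, le_refl 4, by simpa using homog_gen k 0 4 0⟩
      · exact ⟨4, le_refl 4, by simpa using homog_gen k 0 2 1⟩
      · exact ⟨4, le_refl 4, by simpa using homog_gen k 0 0 2⟩
  refine ⟨hIspan, ?_⟩
  intro n hn x hx
  by_contra hxI
  have hx0 : x ≠ 0 := fun h => hxI (h ▸ Ideal.zero_mem _)
  have hxJ : x ∉ Jdeg k (4 * n) := by
    intro h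
    apply hxI
    have h2 := Jdeg_le_span9_pow k n h
    rwa [← hIspan] at h2
  -- minimal weighted degree d of x
  have hsupp : x.support.Nonempty := support_nonempty.mpr hx0
  have hs : (x.support.image fun m => Finsupp.weight Wt3 m).Nonempty := hsupp.image _
  set d := (x.support.image fun m => Finsupp.weight Wt3 m).min' hs with hd
  have hd_le : ∀ m ∈ x.support, d ≤ Finsupp.weight Wt3 m := fun m hm =>
    Finset.min'_le _ _ (Finset.mem_image_of_mem _ hm)
  obtain ⟨m1, hm1s, hm1w⟩ := Finset.mem_image.mp (Finset.min'_mem _ hs)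
  have hd_lt : d < 4 * n := by
    by_contra hge
    push_neg at hge
    exact hxJ fun m hm => le_trans hge (hd_le m (mem_support_iff.mpr hm))
  set xd := weightedHomogeneousComponent Wt3 d x with hxd
  have hxd_hom : IsWeightedHomogeneous Wt3 xd d :=
    weightedHomogeneousComponent_isWeightedHomogeneous d x
  have hxd_ne : xd ≠ 0 := by
    intro h
    have hc : coeff m1 xd = coeff m1 x := by
      rw [hxd, coeff_weightedHomogeneousComponent, if_pos hm1w]
    rw [h, coeff_zero] at hc
    exact mem_support_iff.mp hm1s hc.symm
  have hx_mem : x ∈ Jdeg k d := fun m hm => hd_le m (mem_support_iff.mpr hm)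
  have hxd_mem : xd ∈ Jdeg k d := homog_mem_Jdeg k hxd_hom le_rfl
  set x' := x - xd with hx'
  have hx'_mem : x' ∈ Jdeg k (d + 1) := by
    intro m hm
    rcases eq_or_ne (Finsupp.weight Wt3 m) d with he | he
    · exfalso
      apply hm
      rw [hx', coeff_sub, hxd, coeff_weightedHomogeneousComponent, if_pos he, sub_self]
    · have hmx : coeff m x ≠ 0 := by
        intro h0
        apply hm
        rw [hx', coeff_sub, hxd, coeff_weightedHomogeneousComponent, if_neg he, h0, sub_zero]
      have := hd_le m (mem_support_iff.mpr hmx)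
      omega
  obtain ⟨N, hN, a, ha, heq⟩ := hx
  have hS : (∑ i ∈ Finset.Icc 1 N, a i * x ^ (N - i)) ∈ Jdeg k (d * N + 1) := by
    refine Ideal.sum_mem _ ?_
    intro i hi
    obtain ⟨hi1, hiN⟩ := Finset.mem_Icc.mp hi
    have hai : a i ∈ Jdeg k (4 * (n * i)) := by
      have h1 : a i ∈ I ^ (n * i) := by
        rw [pow_mul]; exact ha i hi
      exact Ideal.pow_le_Jdeg k hIJ (n * i) h1
    have hxp : x ^ (N - i) ∈ Jdeg k (d * (N - i)) := Jdeg_pow k hx_mem (N - i)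
    refine Jdeg_anti k ?_ (Jdeg_mul k hai hxp)
    have e1 : d * (N - i) + d * i = d * N := by
      rw [← Nat.mul_add, Nat.sub_add_cancel hiN]
    have e2 : d * i + i ≤ 4 * (n * i) := by
      calc d * i + i = (d + 1) * i := by ring
        _ ≤ (4 * n) * i := Nat.mul_le_mul_right _ (by omega)
        _ = 4 * (n * i) := by ring
    omega
  have hxsum : x' + xd = x := sub_add_cancel x xd
  have hbin : x ^ N =
      (∑ i ∈ Finset.range N,
        x' ^ (i + 1) * xd ^ (N - (i + 1)) * (N.choose (i + 1) : MvPolynomial (Fin 3) k)) +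
      xd ^ N := by
    rw [← hxsum, add_pow, Finset.sum_range_succ']
    congr 1
    simp
  have hT : (∑ i ∈ Finset.range N,
      x' ^ (i + 1) * xd ^ (N - (i + 1)) * (N.choose (i + 1) : MvPolynomial (Fin 3) k)) ∈
      Jdeg k (d * N + 1) := by
    refine Ideal.sum_mem _ ?_
    intro i hi
    have hiN : i + 1 ≤ N := Finset.mem_range.mp hi
    have h1 : x' ^ (i + 1) ∈ Jdeg k ((d + 1) * (i + 1)) := Jdeg_pow k hx'_mem (i + 1)
    have h2 : xd ^ (N - (i + 1)) ∈ Jdeg k (d * (N - (i + 1))) := Jdeg_pow k hxd_mem _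
    have h4 := Ideal.mul_mem_right ((N.choose (i + 1) : MvPolynomial (Fin 3) k)) _
      (Jdeg_mul k h1 h2)
    refine Jdeg_anti k ?_ h4
    have e1 : d * (N - (i + 1)) + d * (i + 1) = d * N := by
      rw [← Nat.mul_add, Nat.sub_add_cancel hiN]
    have e2 : (d + 1) * (i + 1) = d * (i + 1) + (i + 1) := by ring
    omega
  have hxdN : xd ^ N ∈ Jdeg k (d * N + 1) := by
    have hxN : xd ^ N =
        -(∑ i ∈ Finset.Icc 1 N, a i * x ^ (N - i)) -
        (∑ i ∈ Finset.range N,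
          x' ^ (i + 1) * xd ^ (N - (i + 1)) * (N.choose (i + 1) : MvPolynomial (Fin 3) k)) := by
      have h5 : x ^ N = -(∑ i ∈ Finset.Icc 1 N, a i * x ^ (N - i)) :=
        eq_neg_of_add_eq_zero_left heq
      rw [← h5, hbin]; ring
    rw [hxN]
    exact Submodule.sub_mem _ (Submodule.neg_mem _ hS) hT
  have hne : xd ^ N ≠ 0 := pow_ne_zero _ hxd_ne
  obtain ⟨m2, hm2⟩ := ne_zero_iff.mp hne
  have hhom : IsWeightedHomogeneous Wt3 (xd ^ N) (N * d) := homog_pow k hxd_hom N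
  have hw2 : Finsupp.weight Wt3 m2 = N * d := hhom hm2
  have hle := hxdN m2 hm2
  rw [hw2, Nat.mul_comm N d] at hle
  exact Nat.not_succ_le_self _ hle
end

section
/- Let $k$ be a field and $R = k[x,y]$ graded with $\deg x = 2$, $\deg y = 3$. Then $(R_{\geq 7})^3 \neq R_{\geq 21}$; specifically, $x^{11} \in R_{\geq 21}$ but $x^{11} \notin (R_{\geq 7})^3$. -/
set_option synthInstance.maxHeartbeats 400000
set_option maxHeartbeats 800000

open MvPolynomial

theorem stmt13 (k : Type*) [Field k]
    (w : Fin 2 → ℕ) (hw : w = ![2, 3])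
    (I7 I21 : Ideal (MvPolynomial (Fin 2) k))
    (h7 : I7 = Ideal.span {f | ∃ d : ℕ, 7 ≤ d ∧ IsWeightedHomogeneous w f d})
    (h21 : I21 = Ideal.span {f | ∃ d : ℕ, 21 ≤ d ∧ IsWeightedHomogeneous w f d}) :
    X 0 ^ 11 ∈ I21 ∧ X 0 ^ 11 ∉ I7 ^ 3 ∧ I7 ^ 3 ≠ I21 := by
  subst hw h7 h21
  have hmem : (X 0 ^ 11 : MvPolynomial (Fin 2) k) ∈
      Ideal.span {f | ∃ d : ℕ, 21 ≤ d ∧ IsWeightedHomogeneous ![2,3] f d} := by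
    apply Ideal.subset_span
    refine ⟨22, by norm_num, ?_⟩
    have : (X 0 ^ 11 : MvPolynomial (Fin 2) k) = monomial (Finsupp.single 0 11) 1 := by
      rw [MvPolynomial.X_pow_eq_monomial]
    rw [this]
    apply isWeightedHomogeneous_monomial
    simp [Finsupp.weight_apply, Finsupp.sum_single_index]
  -- the evaluation map y ↦ 0
  set φ : MvPolynomial (Fin 2) k →ₐ[k] Polynomial k :=
    MvPolynomial.aeval ![Polynomial.X, 0] with hφ
  have hgen : ∀ f ∈ {f : MvPolynomial (Fin 2) k | ∃ d : ℕ, 7 ≤ d ∧ IsWeightedHomogeneous ![2,3] f d},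
      φ f ∈ Ideal.span {(Polynomial.X : Polynomial k) ^ 4} := by
    rintro f ⟨d, hd, hf⟩
    rw [Ideal.mem_span_singleton]
    conv_rhs => rw [f.as_sum]
    rw [map_sum]
    apply Finset.dvd_sum
    intro v hv
    rw [hφ, aeval_monomial]
    have hprod : (Finsupp.prod v fun i e => (![Polynomial.X, 0] : Fin 2 → Polynomial k) i ^ e)
        = Polynomial.X ^ (v 0) * (0 : Polynomial k) ^ (v 1) := by
      rw [Finsupp.prod_fintype _ _ (fun i => pow_zero _), Fin.prod_univ_two]
      simp
    rw [hprod]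
    rcases Nat.eq_zero_or_pos (v 1) with h1 | h1
    · have hwt := hf (mem_support_iff.mp hv)
      rw [Finsupp.weight_apply] at hwt
      have hsum := Finsupp.sum_fintype v (fun i c => c • (![2,3] : Fin 2 → ℕ) i)
        (fun i => zero_smul ℕ _)
      rw [hsum, Fin.sum_univ_two] at hwt
      simp only [Matrix.cons_val_zero, Matrix.cons_val_one, Matrix.head_cons,
        smul_eq_mul] at hwt
      have h4 : 4 ≤ v 0 := by omega
      exact Dvd.dvd.mul_left (dvd_mul_of_dvd_left (pow_dvd_pow _ h4) _) _
    · rw [zero_pow (by omega)]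
      simp
  have hmap : Ideal.map φ ((Ideal.span {f : MvPolynomial (Fin 2) k | ∃ d : ℕ, 7 ≤ d ∧ IsWeightedHomogeneous ![2,3] f d})^3)
      ≤ Ideal.span {(Polynomial.X : Polynomial k) ^ 12} := by
    rw [Ideal.map_pow]
    calc (Ideal.map φ (Ideal.span _))^3 ≤ (Ideal.span {(Polynomial.X : Polynomial k) ^ 4})^3 := by
          gcongr
          rw [Ideal.map_span]
          rw [Ideal.span_le]
          rintro _ ⟨f, hf, rfl⟩
          exact hgen f hf
      _ = Ideal.span {(Polynomial.X : Polynomial k) ^ 12} := by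
          rw [Ideal.span_singleton_pow, ← pow_mul]
  have hnot : (X 0 ^ 11 : MvPolynomial (Fin 2) k) ∉
      (Ideal.span {f : MvPolynomial (Fin 2) k | ∃ d : ℕ, 7 ≤ d ∧ IsWeightedHomogeneous ![2,3] f d})^3 := by
    intro h
    have h2 := hmap (Ideal.mem_map_of_mem φ h)
    rw [Ideal.mem_span_singleton, Polynomial.X_pow_dvd_iff] at h2
    have h3 := h2 11 (by norm_num)
    simp [hφ, Matrix.cons_val_zero] at h3
  exact ⟨hmem, hnot, fun h => hnot (h ▸ hmem)⟩
end

section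
/- Let $k$ be a field and $R = k[x,y]$ with $\deg x = 2$, $\deg y = 3$. The monomial ideal $I = (x^{12}, x^{10}y, x^8y^2, x^6y^3, x^5y^4, x^4y^5, x^3y^6, x^2y^7, xy^8, y^9)$ equals its own integral closure; in particular, $R_{\geq 21}$ is not the integral closure of $(R_{\geq 7})^3$. -/
set_option synthInstance.maxHeartbeats 400000
set_option maxHeartbeats 800000

open MvPolynomial

/-!
For a weight `u`, the `u`-order of a polynomial (the least `u`-weight of its monomials) is an
additive valuation `v_u` of `k[x,y]`, and an element `x` integral over an ideal `K` satisfies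
`v_u x ≥ min v_u(K)`: otherwise, in `x^n = -∑ aᵢ x^(n-i)` the left side would have strictly
smaller value than every term on the right.

The exponents `(a, b)` of the monomials of `I` are exactly those with `a + 2b ≥ 12` and
`a + b ≥ 9`, so `I = {v_(1,2) ≥ 12} ∩ {v_(1,1) ≥ 9}` is an intersection of valuation ideals and
hence integrally closed. Likewise `2a + 3b ≥ 7` forces `a + 2b ≥ 4`, so everything integral over
`(R_{≥7})^3` has `v_(1,2) ≥ 12`, whereas `x^9 y ∈ R_{≥21}` has `v_(1,2) = 11`.
-/

namespace AddValuation

variable {S : Type*} [CommRing S] (v : AddValuation S ℕ∞)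

def geIdeal (t : ℕ∞) : Ideal S where
  carrier := {x | t ≤ v x}
  zero_mem' := by simp
  add_mem' {x y} hx hy := le_trans (le_min hx hy) (v.map_add x y)
  smul_mem' c x hx := by
    simp only [Set.mem_ofPred_eq, smul_eq_mul, v.map_mul] at hx ⊢
    exact le_add_left hx

@[simp]
theorem mem_geIdeal {t : ℕ∞} {x : S} : x ∈ v.geIdeal t ↔ t ≤ v x := Iff.rfl

theorem geIdeal_pow_le (t : ℕ∞) (i : ℕ) : v.geIdeal t ^ i ≤ v.geIdeal (i • t) := by
  induction i with
  | zero => simp [geIdeal]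
  | succ i ih =>
    rw [pow_succ, Ideal.mul_le]
    intro a ha b hb
    rw [mem_geIdeal, map_mul, succ_nsmul]
    exact add_le_add (ih ha) hb

theorem mem_geIdeal_of_isIntegralOverIdeal {K : Ideal S} {t : ℕ∞} (hK : K ≤ v.geIdeal t)
    {x : S} (hx : IsIntegralOverIdeal K x) : x ∈ v.geIdeal t := by
  obtain ⟨n, -, a, ha, hsum⟩ := hx
  by_contra hxt
  rw [mem_geIdeal, not_le] at hxt
  obtain ⟨p, hp⟩ := ENat.ne_top_iff_exists.mp (hxt.trans_le le_top).ne
  have hfin (m : ℕ) : m • v x ≠ ⊤ := by simpa [← hp] using ENat.natCast_ne_top (m * p)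
  have hterm : ∀ i ∈ Finset.Icc 1 n, n • v x < v (a i * x ^ (n - i)) := by
    intro i hi
    obtain ⟨hi1, hin⟩ := Finset.mem_Icc.mp hi
    have hai : i • t ≤ v (a i) := geIdeal_pow_le v t i (Ideal.pow_right_mono hK i (ha i hi))
    rw [map_mul, map_pow]
    calc n • v x = i • v x + (n - i) • v x := by rw [← add_nsmul, Nat.add_sub_cancel' hin]
      _ < i • t + (n - i) • v x := by
        refine (ENat.add_lt_add_iff_right (hfin _)).mpr ?_
        simp only [nsmul_eq_mul]
        exact ENat.mul_right_strictMono (by simp; omega) (by simp) hxt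
      _ ≤ _ := add_le_add_left hai _
  have hlt : v (x ^ n) < v (∑ i ∈ Finset.Icc 1 n, a i * x ^ (n - i)) := by
    rw [map_pow]
    exact v.map_lt_sum (hfin n) hterm
  rw [← v.map_neg, ← eq_neg_of_add_eq_zero_right hsum] at hlt
  exact hlt.false

end AddValuation

namespace Finsupp

theorem weight_fin_two (u : Fin 2 → ℕ) (d : Fin 2 →₀ ℕ) :
    weight u d = u 0 * d 0 + u 1 * d 1 := by
  simp [weight_apply, sum_fintype, Fin.sum_univ_two, mul_comm]

theorem single_zero_add_single_one_le_iff {a b : ℕ} {d : Fin 2 →₀ ℕ} :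
    single 0 a + single 1 b ≤ d ↔ a ≤ d 0 ∧ b ≤ d 1 := by
  simp [le_def, Fin.forall_fin_two]

end Finsupp

namespace MvPolynomial

theorem monomial_single_zero_add_single_one {R : Type*} [CommSemiring R] (a b : ℕ) :
    monomial (Finsupp.single 0 a + Finsupp.single 1 b) (1 : R) =
      (X 0 ^ a * X 1 ^ b : MvPolynomial (Fin 2) R) := by
  rw [X_pow_eq_monomial, X_pow_eq_monomial, monomial_mul, one_mul]

variable {σ R : Type*} [CommRing R] [IsDomain R]

noncomputable def weightedOrderValuation (w : σ → ℕ) : AddValuation (MvPolynomial σ R) ℕ∞ :=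
  AddValuation.of (fun f => MvPowerSeries.weightedOrder w (f : MvPowerSeries σ R))
    (by simp) (by simp) (fun _ _ => by simpa using MvPowerSeries.min_weightedOrder_le_add w)
    (fun f g => by simpa using MvPowerSeries.weightedOrder_mul w (f : MvPowerSeries σ R) g)

theorem le_weightedOrderValuation_iff {w : σ → ℕ} {m : ℕ} {f : MvPolynomial σ R} :
    (m : ℕ∞) ≤ weightedOrderValuation w f ↔ ∀ d ∈ f.support, m ≤ Finsupp.weight w d := by
  simp only [weightedOrderValuation, AddValuation.of_apply]
  constructor
  · intro h d hd
    exact_mod_cast h.trans (MvPowerSeries.weightedOrder_le w (d := d) (by simpa using hd))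
  · intro h
    refine MvPowerSeries.nat_le_weightedOrder w fun d hd => ?_
    by_contra hd0
    exact absurd (h d (by simpa using hd0)) (not_le.mpr hd)

@[simp]
theorem weightedOrderValuation_X (w : σ → ℕ) (i : σ) :
    weightedOrderValuation w (X i : MvPolynomial σ R) = w i := by
  simp [weightedOrderValuation, MvPowerSeries.X,
    MvPowerSeries.weightedOrder_monomial_of_ne_zero, Finsupp.weight_single]

theorem span_isWeightedHomogeneous_le_geIdeal {w u : σ → ℕ} {d m : ℕ}
    (h : ∀ e : σ →₀ ℕ, d ≤ Finsupp.weight w e → m ≤ Finsupp.weight u e) :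
    Ideal.span {f : MvPolynomial σ R | ∃ n, d ≤ n ∧ IsWeightedHomogeneous w f n} ≤
      (weightedOrderValuation u).geIdeal m := by
  rw [Ideal.span_le]
  rintro f ⟨n, hdn, hf⟩
  exact le_weightedOrderValuation_iff.mpr fun e he =>
    h e (hdn.trans_eq (hf (mem_support_iff.mp he)).symm)

end MvPolynomial

def staircase : Finset (ℕ × ℕ) :=
  {(12, 0), (10, 1), (8, 2), (6, 3), (5, 4), (4, 5), (3, 6), (2, 7), (1, 8), (0, 9)}

theorem exists_mem_staircase_le_iff {p q : ℕ} :
    (∃ s ∈ staircase, s.1 ≤ p ∧ s.2 ≤ q) ↔ 12 ≤ p + 2 * q ∧ 9 ≤ p + q := by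
  constructor
  · rintro ⟨⟨a, b⟩, hs, ha, hb⟩
    simp only [staircase, Finset.mem_insert, Finset.mem_singleton, Prod.mk.injEq] at hs
    omega
  · rintro ⟨h₁, h₂⟩
    obtain ⟨b, hb, hbq⟩ : ∃ b ≤ 9, b = min q 9 := ⟨_, min_le_right _ _, rfl⟩
    refine ⟨(max (12 - 2 * b) (9 - b), b), ?_, by omega, by omega⟩
    interval_cases b <;> decide

theorem span_staircase_eq {R : Type*} [CommRing R] [IsDomain R] :
    (Ideal.span {X 0 ^ 12, X 0 ^ 10 * X 1, X 0 ^ 8 * X 1 ^ 2, X 0 ^ 6 * X 1 ^ 3,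
      X 0 ^ 5 * X 1 ^ 4, X 0 ^ 4 * X 1 ^ 5, X 0 ^ 3 * X 1 ^ 6, X 0 ^ 2 * X 1 ^ 7,
      X 0 * X 1 ^ 8, X 1 ^ 9} : Ideal (MvPolynomial (Fin 2) R)) =
      (weightedOrderValuation ![1, 2]).geIdeal 12 ⊓ (weightedOrderValuation ![1, 1]).geIdeal 9 := by
  have hgen : ({X 0 ^ 12, X 0 ^ 10 * X 1, X 0 ^ 8 * X 1 ^ 2, X 0 ^ 6 * X 1 ^ 3,
      X 0 ^ 5 * X 1 ^ 4, X 0 ^ 4 * X 1 ^ 5, X 0 ^ 3 * X 1 ^ 6, X 0 ^ 2 * X 1 ^ 7,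
      X 0 * X 1 ^ 8, X 1 ^ 9} : Set (MvPolynomial (Fin 2) R)) =
      (fun s => monomial s 1) ''
        ((fun s : ℕ × ℕ => Finsupp.single 0 s.1 + Finsupp.single 1 s.2) '' staircase) := by
    simp only [staircase, Finset.coe_insert, Finset.coe_singleton, Set.image_insert_eq,
      Set.image_singleton, monomial_single_zero_add_single_one, pow_zero, mul_one, one_mul,
      pow_one]
  ext f
  have h₁ := le_weightedOrderValuation_iff (R := R) (w := ![1, 2]) (m := 12) (f := f)
  have h₂ := le_weightedOrderValuation_iff (R := R) (w := ![1, 1]) (m := 9) (f := f)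
  push_cast at h₁ h₂
  rw [hgen, mem_ideal_span_monomial_image, Submodule.mem_inf, AddValuation.mem_geIdeal,
    AddValuation.mem_geIdeal, h₁, h₂, ← forall₂_and]
  refine forall₂_congr fun d _ => ?_
  simp only [Set.exists_mem_image, Finset.mem_coe, Finsupp.single_zero_add_single_one_le_iff,
    Finsupp.weight_fin_two]
  simpa using exists_mem_staircase_le_iff

open AddValuation

theorem stmt14 (k : Type*) [Field k]
    (w : Fin 2 → ℕ) (hw : w = ![2, 3])
    (I : Ideal (MvPolynomial (Fin 2) k))
    (hI : I = Ideal.span {X 0 ^ 12, X 0 ^ 10 * X 1, X 0 ^ 8 * X 1 ^ 2,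
      X 0 ^ 6 * X 1 ^ 3, X 0 ^ 5 * X 1 ^ 4, X 0 ^ 4 * X 1 ^ 5, X 0 ^ 3 * X 1 ^ 6,
      X 0 ^ 2 * X 1 ^ 7, X 0 * X 1 ^ 8, X 1 ^ 9})
    (I7 I21 : Ideal (MvPolynomial (Fin 2) k))
    (h7 : I7 = Ideal.span {f | ∃ d : ℕ, 7 ≤ d ∧ IsWeightedHomogeneous w f d})
    (h21 : I21 = Ideal.span {f | ∃ d : ℕ, 21 ≤ d ∧ IsWeightedHomogeneous w f d}) :
    (∀ x : MvPolynomial (Fin 2) k, IsIntegralOverIdeal I x → x ∈ I) ∧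
      ¬ (∀ x : MvPolynomial (Fin 2) k,
        x ∈ I21 ↔ IsIntegralOverIdeal (I7 ^ 3) x) := by
  subst hw hI h7 h21
  set v : AddValuation (MvPolynomial (Fin 2) k) ℕ∞ := weightedOrderValuation ![1, 2]
  refine ⟨fun x hx => ?_, fun h => ?_⟩
  · rw [span_staircase_eq] at hx ⊢
    exact ⟨mem_geIdeal_of_isIntegralOverIdeal _ inf_le_left hx,
      mem_geIdeal_of_isIntegralOverIdeal _ inf_le_right hx⟩
  · have hI7 : Ideal.span {f | ∃ d : ℕ, 7 ≤ d ∧ IsWeightedHomogeneous ![2, 3] f d} ≤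
        v.geIdeal (4 : ℕ) :=
      span_isWeightedHomogeneous_le_geIdeal fun e he => by
        simp [Finsupp.weight_fin_two] at he ⊢
        omega
    have hcube : _ ^ 3 ≤ v.geIdeal 12 := (Ideal.pow_right_mono hI7 3).trans (v.geIdeal_pow_le _ 3)
    have hmem : (X 0 ^ 9 * X 1 : MvPolynomial (Fin 2) k) ∈
        Ideal.span {f | ∃ d : ℕ, 21 ≤ d ∧ IsWeightedHomogeneous ![2, 3] f d} :=
      Ideal.subset_span ⟨21, le_rfl,
        ((isWeightedHomogeneous_X k _ 0).pow 9).mul (isWeightedHomogeneous_X k _ 1)⟩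
    have hval := v.mem_geIdeal_of_isIntegralOverIdeal hcube ((h _).mp hmem)
    norm_num [v] at hval
end

section
/- Let $k$ be a field and $R = k[x,y,z]/(x^2 + y^3 z + z^4)$ graded with $\deg x = 2$, $\deg y = 1$, $\deg z = 1$. Let $I = R_{\geq 1} = (x, y, z)$. Then $x$ is integral over $I^2$ but $x \notin I^2$; hence $I^2$ is not integrally closed and $I$ is not a normal ideal. -/
set_option synthInstance.maxHeartbeats 400000
set_option maxHeartbeats 800000

open MvPolynomial

theorem stmt15 (k : Type*) [Field k]
    (w : Fin 3 → ℕ) (hw : w = ![2, 1, 1])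
    (J : Ideal (MvPolynomial (Fin 3) k))
    (hJ : J = Ideal.span {X 0 ^ 2 + X 1 ^ 3 * X 2 + X 2 ^ 4})
    (I : Ideal (MvPolynomial (Fin 3) k ⧸ J))
    (hI : I = Ideal.map (Ideal.Quotient.mk J)
      (Ideal.span {f | ∃ d : ℕ, 1 ≤ d ∧ IsWeightedHomogeneous w f d})) :
    I = Ideal.map (Ideal.Quotient.mk J) (Ideal.span {X 0, X 1, X 2}) ∧
      IsIntegralOverIdeal (I ^ 2) (Ideal.Quotient.mk J (X 0)) ∧
      Ideal.Quotient.mk J (X 0) ∉ I ^ 2 := by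
  classical
  subst hw
  set M : Ideal (MvPolynomial (Fin 3) k) := Ideal.span {X 0, X 1, X 2} with hM
  have hMX : ({X 0, X 1, X 2} : Set (MvPolynomial (Fin 3) k)) =
      MvPolynomial.X '' Set.univ := by
    ext p
    simp only [Set.image_univ, Set.mem_range, Set.mem_insert_iff, Set.mem_singleton_iff]
    constructor
    · rintro (rfl | rfl | rfl)
      exacts [⟨0, rfl⟩, ⟨1, rfl⟩, ⟨2, rfl⟩]
    · rintro ⟨i, rfl⟩
      fin_cases i <;> simp
  have hX0 : (X 0 : MvPolynomial (Fin 3) k) ∈ M := Ideal.subset_span (by simp)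
  have hX1 : (X 1 : MvPolynomial (Fin 3) k) ∈ M := Ideal.subset_span (by simp)
  have hX2 : (X 2 : MvPolynomial (Fin 3) k) ∈ M := Ideal.subset_span (by simp)
  -- `span S = M`
  have hspan : Ideal.span {f : MvPolynomial (Fin 3) k |
      ∃ d : ℕ, 1 ≤ d ∧ IsWeightedHomogeneous ![2, 1, 1] f d} = M := by
    apply le_antisymm
    · rw [Ideal.span_le]
      rintro f ⟨d, hd, hf⟩
      show f ∈ Ideal.span ({X 0, X 1, X 2} : Set (MvPolynomial (Fin 3) k))
      rw [hMX, mem_ideal_span_X_image]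
      intro m hm
      by_contra hcon
      push_neg at hcon
      have hm0 : m = 0 := by
        ext i
        exact hcon i (Set.mem_univ i)
      have := hf (MvPolynomial.mem_support_iff.mp hm)
      rw [hm0, map_zero] at this
      omega
    · rw [hM, Ideal.span_le]
      rintro p hp
      apply Ideal.subset_span
      simp only [Set.mem_insert_iff, Set.mem_singleton_iff] at hp
      rcases hp with rfl | rfl | rfl
      · exact ⟨2, by norm_num, by simpa using isWeightedHomogeneous_X (R := k) ![2, 1, 1] 0⟩
      · exact ⟨1, le_refl 1, by simpa using isWeightedHomogeneous_X (R := k) ![2, 1, 1] 1⟩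
      · exact ⟨1, le_refl 1, by simpa using isWeightedHomogeneous_X (R := k) ![2, 1, 1] 2⟩
  rw [hspan] at hI
  -- f ∈ M^2
  have hfM2 : (X 0 ^ 2 + X 1 ^ 3 * X 2 + X 2 ^ 4 : MvPolynomial (Fin 3) k) ∈ M ^ 2 := by
    rw [pow_two]
    refine Ideal.add_mem _ (Ideal.add_mem _ ?_ ?_) ?_
    · rw [pow_two]; exact Ideal.mul_mem_mul hX0 hX0
    · have h : (X 1 ^ 3 * X 2 : MvPolynomial (Fin 3) k) = X 1 ^ 2 * (X 1 * X 2) := by ring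
      rw [h]
      exact Ideal.mul_mem_left _ _ (Ideal.mul_mem_mul hX1 hX2)
    · have h : (X 2 ^ 4 : MvPolynomial (Fin 3) k) = (X 2 * X 2) * (X 2 * X 2) := by ring
      rw [h]
      exact Ideal.mul_mem_left _ _ (Ideal.mul_mem_mul hX2 hX2)
  have hJM2 : J ≤ M ^ 2 := by
    rw [hJ, Ideal.span_le, Set.singleton_subset_iff]
    exact hfM2
  -- X 0 ∉ M^2
  have hX0M2 : (X 0 : MvPolynomial (Fin 3) k) ∉ M ^ 2 := by
    intro h
    have hMD : M ^ 2 ≤ Ideal.span ((fun s => monomial s (1 : k)) ''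
        {m : Fin 3 →₀ ℕ | 2 ≤ m.sum fun _ n => n}) := by
      rw [pow_two, hM, Ideal.span_mul_span', Ideal.span_le]
      rintro p hp
      rw [Set.mem_mul] at hp
      obtain ⟨u, hu, v, hv, rfl⟩ := hp
      simp only [Set.mem_insert_iff, Set.mem_singleton_iff] at hu hv
      apply Ideal.subset_span
      have hXX : ∀ i j : Fin 3, (X i * X j : MvPolynomial (Fin 3) k) =
          monomial (Finsupp.single i 1 + Finsupp.single j 1) 1 := fun i j => by
        rw [show (X i : MvPolynomial (Fin 3) k) = monomial (Finsupp.single i 1) 1 from rfl,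
          show (X j : MvPolynomial (Fin 3) k) = monomial (Finsupp.single j 1) 1 from rfl,
          monomial_mul, one_mul]
      rcases hu with rfl | rfl | rfl <;> rcases hv with rfl | rfl | rfl <;>
        refine ⟨_, ?_, (hXX _ _).symm⟩ <;>
        simp [Finsupp.sum_add_index', Finsupp.sum_single_index]
    have hXD := hMD h
    rw [mem_ideal_span_monomial_image] at hXD
    obtain ⟨s, hs2, hsle⟩ := hXD (Finsupp.single 0 1)
      (by rw [support_X, Finset.mem_singleton])
    have hle : ∀ i : Fin 3, s i ≤ (Finsupp.single (0 : Fin 3) 1) i := fun i =>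
      Finsupp.le_def.mp hsle i
    have hsum : (s.sum fun _ n => n) = s 0 + s 1 + s 2 := by
      rw [Finsupp.sum_fintype _ _ (fun _ => rfl), Fin.sum_univ_three]
    have h0 := hle 0
    have h1 := hle 1
    have h2 := hle 2
    simp [Finsupp.single_apply] at h0 h1 h2
    rw [Set.mem_setOf_eq, hsum] at hs2
    omega
  refine ⟨hI, ?_, ?_⟩
  · -- integrality
    refine ⟨2, by norm_num, fun i => if i = 2 then
      Ideal.Quotient.mk J (X 1 ^ 3 * X 2 + X 2 ^ 4) else 0, ?_, ?_⟩
    · intro i hi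
      simp only [Finset.mem_Icc] at hi
      have hi' : i = 1 ∨ i = 2 := by omega
      rcases hi' with rfl | rfl
      · simp
      · dsimp only
        rw [if_pos rfl]
        have hI4 : (I ^ 2) ^ 2 = I ^ 4 := by ring
        rw [hI4, hI, ← Ideal.map_pow]
        apply Ideal.mem_map_of_mem
        have h1 : (X 1 ^ 3 * X 2 : MvPolynomial (Fin 3) k) ∈ M ^ 4 := by
          have h : (X 1 ^ 3 * X 2 : MvPolynomial (Fin 3) k) = (X 1 * X 1) * (X 1 * X 2) := by
            ring
          rw [h, show (4 : ℕ) = 2 + 2 by rfl, pow_add, pow_two]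
          exact Ideal.mul_mem_mul (Ideal.mul_mem_mul hX1 hX1) (Ideal.mul_mem_mul hX1 hX2)
        have h2 : (X 2 ^ 4 : MvPolynomial (Fin 3) k) ∈ M ^ 4 :=
          Ideal.pow_mem_pow hX2 4
        exact Ideal.add_mem _ h1 h2
    · rw [show Finset.Icc 1 2 = ({1, 2} : Finset ℕ) from rfl,
        Finset.sum_insert (by norm_num), Finset.sum_singleton]
      dsimp only
      rw [if_neg (by norm_num : (1 : ℕ) ≠ 2), if_pos rfl]
      simp only [zero_mul, zero_add, Nat.sub_self, pow_zero, mul_one]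
      rw [← map_pow, ← map_add, Ideal.Quotient.eq_zero_iff_mem, hJ,
        show (X 0 ^ 2 + (X 1 ^ 3 * X 2 + X 2 ^ 4) : MvPolynomial (Fin 3) k)
          = X 0 ^ 2 + X 1 ^ 3 * X 2 + X 2 ^ 4 by ring]
      exact Ideal.subset_span rfl
  · -- non-membership
    intro h
    rw [hI, ← Ideal.map_pow, Ideal.mem_map_iff_of_surjective _
      Ideal.Quotient.mk_surjective] at h
    obtain ⟨g, hg, hgeq⟩ := h
    have hsub : X 0 - g ∈ J := by
      rw [← Ideal.Quotient.eq_zero_iff_mem, map_sub, hgeq, sub_self]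
    have hmem : (X 0 : MvPolynomial (Fin 3) k) ∈ M ^ 2 := by
      have := Ideal.add_mem _ hg (hJM2 hsub)
      simpa using this
    exact hX0M2 hmem
end

section
/- Let $m \geq 1$, $p \geq 2$, let $A_0,\dots,A_m$ be positive integers with lcm $A$ and $a_i = A/A_i$. Suppose $c_0,\dots,c_m$ are nonnegative integers with $\sum_i c_i A_i \geq pmA$ and $c_i < m a_i$ for all $i$. Then there exist nonnegative integers $d_0,\dots,d_m$ with $d_i \leq c_i$ for all $i$, $\sum_i d_i A_i = mA$, and each $d_i$ a multiple of $a_i$. -/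
lemma aux_exists_le_sum (s : Finset ℕ) (k : ℕ → ℕ) :
    ∀ n : ℕ, n ≤ ∑ i ∈ s, k i →
      ∃ g : ℕ → ℕ, (∀ i ∈ s, g i ≤ k i) ∧ ∑ i ∈ s, g i = n := by
  induction s using Finset.induction_on with
  | empty =>
    intro n hn
    simp at hn
    exact ⟨fun _ => 0, by simp, by simp [hn]⟩
  | @insert i s hx ih =>
    intro n hn
    rw [Finset.sum_insert hx] at hn
    set t := min n (k i) with ht
    have h2 : n - t ≤ ∑ j ∈ s, k j := by omega
    obtain ⟨g, hg1, hg2⟩ := ih (n - t) h2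
    refine ⟨fun j => if j = i then t else g j, ?_, ?_⟩
    · intro j hj
      rcases Finset.mem_insert.mp hj with h | h
      · simp [h]; omega
      · have : j ≠ i := fun e => hx (e ▸ h)
        simp [this]; exact hg1 j h
    · rw [Finset.sum_insert hx]
      have he : (if i = i then t else g i) = t := if_pos rfl
      rw [he]
      have : ∑ j ∈ s, (if j = i then t else g j) = ∑ j ∈ s, g j := by
        apply Finset.sum_congr rfl
        intro j hj
        have : j ≠ i := fun e => hx (e ▸ hj)
        simp [this]
      rw [this, hg2]
      omega

theorem stmt16 (m p : ℕ) (hm : 1 ≤ m) (hp : 2 ≤ p)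
    (A : ℕ → ℕ) (hApos : ∀ i ≤ m, 0 < A i)
    (L : ℕ) (hL : L = (Finset.range (m + 1)).lcm A)
    (a : ℕ → ℕ) (ha : ∀ i ≤ m, a i = L / A i)
    (c : ℕ → ℕ)
    (hc : p * m * L ≤ ∑ i ∈ Finset.range (m + 1), c i * A i)
    (hcm : ∀ i ≤ m, c i < m * a i) :
    ∃ d : ℕ → ℕ, (∀ i ≤ m, d i ≤ c i ∧ a i ∣ d i) ∧
      ∑ i ∈ Finset.range (m + 1), d i * A i = m * L := by
  have hdvd : ∀ i ≤ m, A i ∣ L := by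
    intro i hi
    rw [hL]
    exact Finset.dvd_lcm (Finset.mem_range.mpr (by omega))
  have hLpos : 0 < L := by
    rcases Nat.eq_zero_or_pos L with h | h
    · exfalso
      have h0 : a 0 = 0 := by rw [ha 0 (by omega), h]; simp
      have h1 := hcm 0 (by omega)
      rw [h0, Nat.mul_zero] at h1
      omega
    · exact h
  have haA : ∀ i ≤ m, a i * A i = L := by
    intro i hi
    rw [ha i hi]
    exact Nat.div_mul_cancel (hdvd i hi)
  have hapos : ∀ i ≤ m, 0 < a i := by
    intro i hi
    have := haA i hi
    by_contra h
    simp [Nat.eq_zero_of_not_pos h] at this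
    omega
  set k : ℕ → ℕ := fun i => c i / a i with hk
  -- ∑ k ≥ m
  have hksum : m ≤ ∑ i ∈ Finset.range (m + 1), k i := by
    by_contra h
    push_neg at h
    have hlt : ∑ i ∈ Finset.range (m + 1), c i * A i
        < ∑ i ∈ Finset.range (m + 1), (k i + 1) * L := by
      apply Finset.sum_lt_sum_of_nonempty (by simp)
      intro i hi
      have hi' : i ≤ m := by simp at hi; omega
      have h1 : c i < (k i + 1) * a i := by
        rw [hk]
        calc c i = c i / a i * a i + c i % a i := (Nat.div_add_mod' _ _).symm
          _ < (c i / a i + 1) * a i := by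
              have := Nat.mod_lt (c i) (hapos i hi')
              rw [add_mul, one_mul]; omega
      calc c i * A i < ((k i + 1) * a i) * A i :=
            (Nat.mul_lt_mul_right (hApos i hi')).mpr h1
        _ = (k i + 1) * (a i * A i) := by ring
        _ = (k i + 1) * L := by rw [haA i hi']
    have heq : ∑ i ∈ Finset.range (m + 1), (k i + 1) * L
        = (∑ i ∈ Finset.range (m + 1), k i + (m + 1)) * L := by
      rw [← Finset.sum_mul, Finset.sum_add_distrib]
      simp
    rw [heq] at hlt
    have h2 : (∑ i ∈ Finset.range (m + 1), k i + (m + 1)) * L ≤ 2 * m * L := by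
      apply Nat.mul_le_mul_right
      omega
    have h3 : 2 * m * L ≤ p * m * L := by
      apply Nat.mul_le_mul_right
      exact Nat.mul_le_mul_right m hp
    omega
  obtain ⟨g, hg1, hg2⟩ := aux_exists_le_sum (Finset.range (m + 1)) k m hksum
  refine ⟨fun i => g i * a i, ?_, ?_⟩
  · intro i hi
    have hgi : g i ≤ k i := hg1 i (Finset.mem_range.mpr (by omega))
    constructor
    · calc g i * a i ≤ k i * a i := Nat.mul_le_mul_right _ hgi
        _ ≤ c i := Nat.div_mul_le_self _ _
    · exact ⟨g i, mul_comm _ _⟩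
  · calc ∑ i ∈ Finset.range (m + 1), g i * a i * A i
        = ∑ i ∈ Finset.range (m + 1), g i * L := by
          apply Finset.sum_congr rfl
          intro i hi
          rw [mul_assoc, haA i (by simp at hi; omega)]
      _ = (∑ i ∈ Finset.range (m + 1), g i) * L := by rw [Finset.sum_mul]
      _ = m * L := by rw [hg2]
end

section
/- Let $m \geq 1$ and let $A_0,\dots,A_m$ be positive integers with lcm $A$ and $a_i = A/A_i$. Then for every integer $p \geq 1$ and every tuple of nonnegative integers $(c_0,\dots,c_m)$ with $\sum_i c_i A_i \geq pmA$, the tuple can be written as a sum $(c_0,\dots,c_m) = \sum_{j=1}^p (e_0^{(j)},\dots,e_m^{(j)})$ of $p$ tuples of nonnegative integers each satisfying $\sum_i e_i^{(j)} A_i \geq mA$. -/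
/-!
Every weight `A i` divides `L`, so `L / A i` copies of the index `i` form a block of weight
exactly `L`. A tuple of weight at least `2 m L` contains at least `m` disjoint blocks: in each of
the `m + 1` coordinates the part not covered by blocks weighs less than `L`. Splitting off `m`
blocks leaves a piece of weight exactly `m L` and a remainder of weight at least `(p - 1) m L`,
and induction on `p` finishes.
-/

open Finset

theorem Finset.exists_le_sum_eq_of_le_sum {ι : Type*} [DecidableEq ι] {s : Finset ι}
    {q : ι → ℕ} {k : ℕ} (hk : k ≤ ∑ i ∈ s, q i) : ∃ n ≤ q, ∑ i ∈ s, n i = k := by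
  induction k with
  | zero => exact ⟨0, fun _ => Nat.zero_le _, by simp⟩
  | succ k ih =>
    obtain ⟨n, hnq, hn⟩ := ih (by omega)
    obtain ⟨i, hi, hlt⟩ := exists_lt_of_sum_lt (hn.trans_lt hk)
    refine ⟨Function.update n i (n i + 1), fun j => ?_, ?_⟩
    · rcases eq_or_ne j i with rfl | hji
      · simpa using hlt
      · simpa [hji] using hnq j
    · rw [sum_update_of_mem hi, ← hn, ← add_sum_erase s n hi, sdiff_singleton_eq_erase]
      ring

theorem Nat.mul_div_mul_div_le (a b c : ℕ) : a * b / c * (c / b) ≤ a := by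
  rcases Nat.eq_zero_or_pos b with rfl | hb
  · simp
  refine Nat.le_of_mul_le_mul_right ?_ hb
  calc a * b / c * (c / b) * b = a * b / c * (c / b * b) := mul_assoc ..
    _ ≤ a * b / c * c := Nat.mul_le_mul_left _ (Nat.div_mul_le_self c b)
    _ ≤ a * b := Nat.div_mul_le_self _ c

theorem Finset.sum_lt_sum_div_add_card_mul {ι : Type*} {s : Finset ι} (hs : s.Nonempty)
    (f : ι → ℕ) {L : ℕ} (hL : 0 < L) :
    ∑ i ∈ s, f i < (∑ i ∈ s, f i / L + #s) * L := by
  calc ∑ i ∈ s, f i < ∑ i ∈ s, (f i / L * L + L) :=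
        sum_lt_sum_of_nonempty hs fun i _ => Nat.lt_div_mul_add hL
    _ = (∑ i ∈ s, f i / L + #s) * L := by
        rw [sum_add_distrib, ← sum_mul, sum_const, smul_eq_mul, add_mul]

section Decomposition

variable {ι : Type*} [DecidableEq ι] {s : Finset ι} {w : ι → ℕ} {L : ℕ}

theorem exists_le_sum_mul_eq (hw : ∀ i ∈ s, w i ∣ L) {c : ι → ℕ} {k : ℕ}
    (hk : k ≤ ∑ i ∈ s, c i * w i / L) :
    ∃ g ≤ c, ∑ i ∈ s, g i * w i = k * L := by
  obtain ⟨n, hnq, hn⟩ := exists_le_sum_eq_of_le_sum hk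
  refine ⟨fun i => n i * (L / w i), fun i => ?_, ?_⟩
  · exact (Nat.mul_le_mul_right _ (hnq i)).trans (Nat.mul_div_mul_div_le _ _ _)
  · rw [← hn, sum_mul]
    exact sum_congr rfl fun i hi => by rw [mul_assoc, Nat.div_mul_cancel (hw i hi)]

theorem exists_sum_eq_of_mul_le_sum_mul (hs : s.Nonempty) (hL : 0 < L)
    (hw : ∀ i ∈ s, w i ∣ L) {k : ℕ} (hk : #s ≤ k + 1) {p : ℕ} (hp : 1 ≤ p) {c : ι → ℕ}
    (hc : p * k * L ≤ ∑ i ∈ s, c i * w i) :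
    ∃ e : ℕ → ι → ℕ, ∑ j ∈ range p, e j = c ∧ ∀ j < p, k * L ≤ ∑ i ∈ s, e j i * w i := by
  induction p, hp using Nat.le_induction generalizing c with
  | base => exact ⟨fun _ => c, by simp, fun j hj => by simpa using hc⟩
  | succ p hp ih =>
    have hblocks : k ≤ ∑ i ∈ s, c i * w i / L := by
      have h2 : 2 * k * L ≤ ∑ i ∈ s, c i * w i :=
        le_trans (Nat.mul_le_mul_right _ (Nat.mul_le_mul_right _ (by omega))) hc
      have := Nat.lt_of_mul_lt_mul_right
        (h2.trans_lt (sum_lt_sum_div_add_card_mul hs (fun i => c i * w i) hL))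
      omega
    obtain ⟨g, hgc, hg⟩ := exists_le_sum_mul_eq hw hblocks
    have hsplit : ∑ i ∈ s, c i * w i = ∑ i ∈ s, (c - g) i * w i + k * L := by
      rw [← hg, ← sum_add_distrib]
      exact sum_congr rfl fun i _ => by rw [← add_mul, Pi.sub_apply, Nat.sub_add_cancel (hgc i)]
    obtain ⟨e, he, hek⟩ := ih (c := c - g) (by rw [add_mul, add_mul, one_mul] at hc; omega)
    refine ⟨Function.update e p g, ?_, fun j hj => ?_⟩
    · rw [sum_range_succ, Function.update_self,
        sum_congr rfl fun j hj => Function.update_of_ne (mem_range.1 hj).ne g e, he,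
        tsub_add_cancel_of_le hgc]
    · rcases (Nat.lt_succ_iff.1 hj).lt_or_eq with hj | rfl
      · simpa [Function.update_of_ne hj.ne] using hek j hj
      · simp [hg]

end Decomposition

theorem stmt17_general (m : ℕ)
    (A : ℕ → ℕ) (hApos : ∀ i ≤ m, 0 < A i)
    (L : ℕ) (hL : L = (Finset.range (m + 1)).lcm A)
    (p : ℕ) (hp : 1 ≤ p) (c : ℕ → ℕ)
    (hc : p * m * L ≤ ∑ i ∈ Finset.range (m + 1), c i * A i) :
    ∃ e : ℕ → ℕ → ℕ,
      (∀ i ≤ m, c i = ∑ j ∈ Finset.range p, e j i) ∧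
      ∀ j < p, m * L ≤ ∑ i ∈ Finset.range (m + 1), e j i * A i := by
  have hLpos : 0 < L := by
    rw [hL, Nat.pos_iff_ne_zero, Ne, Finset.lcm_eq_zero_iff]
    rintro ⟨i, hi, hAi⟩
    exact (hApos i (mem_range_succ_iff.1 hi)).ne' hAi
  have hdvd : ∀ i ∈ range (m + 1), A i ∣ L := fun i hi => hL ▸ dvd_lcm hi
  obtain ⟨e, he, hem⟩ := exists_sum_eq_of_mul_le_sum_mul nonempty_range_add_one hLpos hdvd
    (card_range _).le hp hc
  exact ⟨e, fun i _ => by rw [← he, Finset.sum_apply], hem⟩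

theorem stmt17 (m : ℕ) (hm : 1 ≤ m)
    (A : ℕ → ℕ) (hApos : ∀ i ≤ m, 0 < A i)
    (L : ℕ) (hL : L = (Finset.range (m + 1)).lcm A)
    (a : ℕ → ℕ) (ha : ∀ i ≤ m, a i = L / A i)
    (p : ℕ) (hp : 1 ≤ p) (c : ℕ → ℕ)
    (hc : p * m * L ≤ ∑ i ∈ Finset.range (m + 1), c i * A i) :
    ∃ e : ℕ → ℕ → ℕ,
      (∀ i ≤ m, c i = ∑ j ∈ Finset.range p, e j i) ∧
      ∀ j < p, m * L ≤ ∑ i ∈ Finset.range (m + 1), e j i * A i :=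
  stmt17_general m A hApos L hL p hp c hc
end

section
/- Let $S$ be a Noetherian domain, $J$ an ideal of $S$, and $x \in S$. Then $x$ satisfies an equation $x^n + a_1 x^{n-1} + \cdots + a_n = 0$ with $a_i \in J^i$ for some $n \geq 1$ if and only if there exists a nonzero $c \in S$ such that $c x^n \in J^n$ for all positive integers $n$. -/
set_option maxHeartbeats 1000000
set_option synthInstance.maxHeartbeats 400000

open Polynomial


theorem sum_range_sub_eq' {S : Type*} [CommRing S] (n : ℕ) (f : ℕ → S) :
    ∑ i ∈ Finset.range n, f (n - i) = ∑ j ∈ Finset.Icc 1 n, f j := by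
  apply Finset.sum_nbij' (fun i => n - i) (fun j => n - j) <;>
    simp +contextual [Finset.mem_range, Finset.mem_Icc] <;> omega

theorem fwd (S : Type*) [CommRing S] [IsDomain S]
    (J : Ideal S) (x : S) (n : ℕ) (hn : 0 < n) (a : ℕ → S)
    (ha : ∀ i ∈ Finset.Icc 1 n, a i ∈ J ^ i)
    (heq : x ^ n + ∑ i ∈ Finset.Icc 1 n, a i * x ^ (n - i) = 0) :
    ∃ c : S, c ≠ 0 ∧ ∀ m : ℕ, 0 < m → c * x ^ m ∈ J ^ m := by
  rcases eq_or_ne x 0 with rfl | hx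
  · exact ⟨1, one_ne_zero, fun m hm => by
      rw [zero_pow (by omega), mul_zero]; exact Ideal.zero_mem _⟩
  -- key induction
  have key : ∀ m : ℕ, ∃ b : ℕ → S, (∀ i < n, b i ∈ J ^ (m + (n - 1 - i))) ∧
      x ^ (m + (n - 1)) = ∑ i ∈ Finset.range n, b i * x ^ i := by
    intro m
    induction m with
    | zero =>
      refine ⟨fun i => if i = n - 1 then 1 else 0, ?_, ?_⟩
      · intro i hi
        by_cases hi' : i = n - 1
        · simp only [hi', if_pos rfl]
          rw [show 0 + (n - 1 - (n - 1)) = 0 by omega, pow_zero]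
          simp
        · simp only [if_neg hi']
          exact Ideal.zero_mem _
      · rw [Finset.sum_eq_single (n - 1)]
        · simp
        · intro i _ hi'; simp [hi']
        · intro hmem; exact absurd (Finset.mem_range.mpr (by omega)) hmem
    | succ m ih =>
      obtain ⟨b, hbmem, hbeq⟩ := ih
      refine ⟨fun i => (if 1 ≤ i then b (i - 1) else 0) - b (n - 1) * a (n - i), ?_, ?_⟩
      · intro i hi
        apply Ideal.sub_mem
        · by_cases h1 : 1 ≤ i
          · rw [if_pos h1]
            have := hbmem (i - 1) (by omega)
            rwa [show m + (n - 1 - (i - 1)) = m + 1 + (n - 1 - i) by omega] at this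
          · rw [if_neg h1]; exact Ideal.zero_mem _
        · have h1 : b (n - 1) ∈ J ^ m := by
            have := hbmem (n - 1) (by omega)
            rwa [show m + (n - 1 - (n - 1)) = m by omega] at this
          have h2 : a (n - i) ∈ J ^ (n - i) := ha _ (Finset.mem_Icc.mpr (by omega))
          have := Ideal.mul_mem_mul h1 h2
          rwa [← pow_add, show m + (n - i) = m + 1 + (n - 1 - i) by omega] at this
      · have hxn : x ^ n = -∑ i ∈ Finset.Icc 1 n, a i * x ^ (n - i) := by
          linear_combination heq
        have step1 : x ^ (m + 1 + (n - 1)) = ∑ i ∈ Finset.range n, b i * x ^ (i + 1) := by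
          rw [show m + 1 + (n - 1) = (m + (n - 1)) + 1 by omega, pow_succ, hbeq,
            Finset.sum_mul]
          apply Finset.sum_congr rfl
          intro i _
          rw [pow_succ]; ring
        rw [step1]
        -- split off top term
        rw [show n = (n - 1) + 1 by omega, Finset.sum_range_succ,
          show (n - 1) + 1 = n by omega]
        -- RHS
        simp only [sub_mul]
        rw [Finset.sum_sub_distrib]
        have hfirst : ∑ i ∈ Finset.range n, (if 1 ≤ i then b (i - 1) else 0) * x ^ i
            = ∑ i ∈ Finset.range (n - 1), b i * x ^ (i + 1) := by
          rw [show n = (n - 1) + 1 by omega]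
          rw [Finset.sum_range_succ']
          simp only [Nat.le_add_left, if_pos, Nat.add_sub_cancel, if_neg (by omega : ¬ 1 ≤ 0)]
          rw [zero_mul, add_zero]
        have hsecond : ∑ i ∈ Finset.range n, b (n - 1) * a (n - i) * x ^ i
            = b (n - 1) * ∑ j ∈ Finset.Icc 1 n, a j * x ^ (n - j) := by
          rw [Finset.mul_sum, ← sum_range_sub_eq' n (fun j => b (n - 1) * (a j * x ^ (n - j)))]
          apply Finset.sum_congr rfl
          intro i hi
          rw [Finset.mem_range] at hi
          rw [show n - (n - i) = i by omega]
          ring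
        rw [hfirst, hsecond, hxn]
        ring
  refine ⟨x ^ (n - 1), pow_ne_zero _ hx, fun m hm => ?_⟩
  obtain ⟨b, hbmem, hbeq⟩ := key m
  rw [mul_comm, ← pow_add, hbeq]
  apply Ideal.sum_mem
  intro i hi
  rw [Finset.mem_range] at hi
  apply Ideal.mul_mem_right
  exact Ideal.pow_le_pow_right (by omega) (hbmem i hi)

theorem bwd (S : Type*) [CommRing S] [IsDomain S] [IsNoetherianRing S]
    (J : Ideal S) (x : S) (c : S) (hc : c ≠ 0) (h : ∀ n : ℕ, 0 < n → c * x ^ n ∈ J ^ n) :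
    (∃ n : ℕ, 0 < n ∧ ∃ a : ℕ → S, (∀ i ∈ Finset.Icc 1 n, a i ∈ J ^ i) ∧
        x ^ n + ∑ i ∈ Finset.Icc 1 n, a i * x ^ (n - i) = 0) := by
  set A := reesAlgebra J with hA
  have hmono : ∀ k : ℕ, (monomial k (c * x ^ k) : S[X]) ∈ A := by
    intro k
    refine reesAlgebra.monomial_mem.mpr ?_
    rcases Nat.eq_zero_or_pos k with rfl | hk
    · simp
    · exact h k hk
  have hCc : (C c : S[X]) ≠ 0 := by simpa using hc
  let φ : S[X] →ₗ[A] S[X] :=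
    { toFun := fun f => C c * f
      map_add' := fun f g => mul_add _ _ _
      map_smul' := fun r f => by
        simp only [RingHom.id_apply]
        show C c * ((r : S[X]) * f) = (r : S[X]) * (C c * f)
        ring }
  have hφinj : Function.Injective φ := fun f g hfg => by
    exact mul_left_cancel₀ hCc hfg
  let N : Submodule A S[X] := Submodule.span A (Set.range fun k : ℕ => (C x * X) ^ k)
  have hN : N ≠ ⊥ := by
    intro hbot
    have h1 : (1 : S[X]) ∈ N :=
      Submodule.subset_span ⟨0, by simp⟩
    rw [hbot, Submodule.mem_bot] at h1
    exact one_ne_zero h1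
  let A' : Submodule A S[X] := Submodule.span A {(1 : S[X])}
  have hA'fg : A'.FG := ⟨{1}, by simp [A']⟩
  have hNoethA' : IsNoetherian A A' := isNoetherian_of_fg_of_noetherian _ hA'fg
  have hmaple : N.map φ ≤ A' := by
    rw [Submodule.map_span, Submodule.span_le]
    rintro _ ⟨_, ⟨k, rfl⟩, rfl⟩
    show C c * (C x * X) ^ k ∈ A'
    have heq : C c * (C x * X) ^ k = (monomial k (c * x ^ k) : S[X]) := by
      rw [mul_pow, ← C_pow, ← mul_assoc, ← C_mul, C_mul_X_pow_eq_monomial]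
    rw [heq]
    exact Submodule.mem_span_singleton.mpr ⟨⟨_, hmono k⟩, by
      show (monomial k (c * x ^ k) : S[X]) * 1 = _; rw [mul_one]⟩
  have hmapfg : (N.map φ).FG := by
    have heq : N.map φ = Submodule.map A'.subtype ((N.map φ).comap A'.subtype) := by
      rw [Submodule.map_comap_subtype, inf_eq_right.mpr hmaple]
    rw [heq]
    exact Submodule.FG.map _ (IsNoetherian.noetherian _)
  have hNfg : N.FG := Submodule.fg_of_fg_map_injective φ hφinj hmapfg
  have hstab : ∀ f ∈ N, (C x * X) • f ∈ N := by
    intro f hf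
    refine Submodule.span_induction ?_ ?_ ?_ ?_ hf
    · rintro _ ⟨k, rfl⟩
      have : (C x * X) • (C x * X) ^ k = (C x * X) ^ (k + 1) := by
        rw [pow_succ, smul_eq_mul]; ring
      exact this ▸ Submodule.subset_span ⟨k + 1, rfl⟩
    · simp
    · intro a b _ _ ha hb
      rw [smul_add]; exact N.add_mem ha hb
    · intro r m _ hm
      rw [smul_comm]; exact N.smul_mem r hm
  have hint : IsIntegral A (C x * X) :=
    isIntegral_of_smul_mem_submodule N hN hNfg _ hstab
  obtain ⟨p, hpmonic, hpeval⟩ := hint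
  set n := p.natDegree with hn
  have hn1 : 0 < n := by
    rcases Nat.eq_zero_or_pos n with h0 | h0
    · exfalso
      have hp1 : p = 1 := hpmonic.natDegree_eq_zero.mp h0
      rw [hp1, eval₂_one] at hpeval
      exact one_ne_zero hpeval
    · exact h0
  -- expand the evaluation
  rw [eval₂_eq_sum_range] at hpeval
  -- coefficients of p, viewed in S[X]
  have hcoeff : ∀ i, ∀ j, ((p.coeff i : S[X])).coeff j ∈ J ^ j := fun i j => (p.coeff i).2 j
  -- take coefficient n of the equation
  have hkey : ∑ i ∈ Finset.range (n + 1), ((p.coeff i : S[X])).coeff (n - i) * x ^ i = 0 := by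
    have hc0 := congrArg (fun q : S[X] => q.coeff n) hpeval
    simp only [Polynomial.finset_sum_coeff, Polynomial.coeff_zero] at hc0
    rw [← hc0]
    apply Finset.sum_congr rfl
    intro i hi
    rw [Finset.mem_range] at hi
    have heq2 : (algebraMap A S[X]) (p.coeff i) * (C x * X) ^ i
        = (p.coeff i : S[X]) * monomial i (x ^ i) := by
      rw [mul_pow, ← C_pow, ← Polynomial.C_mul_X_pow_eq_monomial]
      rfl
    rw [heq2]
    conv_rhs => rw [show n = (n - i) + i by omega]
    rw [Polynomial.coeff_mul_monomial]
  refine ⟨n, hn1, fun j => ((p.coeff (n - j) : S[X])).coeff j, fun j _ => hcoeff _ j, ?_⟩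
  rw [Finset.sum_range_succ] at hkey
  have htop : ((p.coeff n : S[X])).coeff (n - n) * x ^ n = x ^ n := by
    have hcn : p.coeff n = 1 := hpmonic.coeff_natDegree
    rw [hcn]
    simp
  rw [htop] at hkey
  have hsum : ∑ i ∈ Finset.range n, ((p.coeff i : S[X])).coeff (n - i) * x ^ i
      = ∑ j ∈ Finset.Icc 1 n, ((p.coeff (n - j) : S[X])).coeff j * x ^ (n - j) := by
    rw [← sum_range_sub_eq' n (fun j => ((p.coeff (n - j) : S[X])).coeff j * x ^ (n - j))]
    apply Finset.sum_congr rfl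
    intro i hi
    rw [Finset.mem_range] at hi
    simp only [show n - (n - i) = i by omega]
  rw [← hsum, add_comm]
  exact hkey


theorem stmt18 (S : Type*) [CommRing S] [IsDomain S] [IsNoetherianRing S]
    (J : Ideal S) (x : S) :
    (∃ n : ℕ, 0 < n ∧ ∃ a : ℕ → S, (∀ i ∈ Finset.Icc 1 n, a i ∈ J ^ i) ∧
        x ^ n + ∑ i ∈ Finset.Icc 1 n, a i * x ^ (n - i) = 0) ↔
      (∃ c : S, c ≠ 0 ∧ ∀ n : ℕ, 0 < n → c * x ^ n ∈ J ^ n) := by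
  constructor
  · rintro ⟨n, hn, a, ha, heq⟩
    exact fwd S J x n hn a ha heq
  · rintro ⟨c, hc, h⟩
    exact bwd S J x c hc h
end
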